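/- arXiv:1010.4429 — 7 statements merged into one kernel-verified Lean document; each statement's English description precedes it below -/
import Mathlib

section
/- For every p ∈ (0,1) and ε > 0 there exists k₀ such that for every integer k ≥ k₀, every integer n with n ≥ k³/6, and every r with 0 ≤ r ≤ k−1: if X is a binomial random variable with parameters n and p, then the probability that X ≡ r (mod k) differs from 1/k by at most ε/k. -/
/-!
Roots-of-unity filter: with `ζ = exp (2πi/k)` and `q = 1 - p`,
`k · ℙ(X ≡ r mod k) = ∑_{j<k} ζ^{-jr} (q + p ζ^j)^n`. The term `j = 0` equals `1`. For
`0 < j < k` we have `|q + p ζ^j|² = 1 - 2pq (1 - cos (2πj/k))` and, by Jordan's inequality,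
`1 - cos (2πj/k) = 2 sin² (πj/k) ≥ 8/k²`, so every other term has modulus at most
`exp (-8pqn/k²) ≤ exp (-4pqk/3)` once `n ≥ k³/6`. Hence
`k · |ℙ(X ≡ r mod k) - 1/k| ≤ k exp (-4pqk/3) → 0`.
-/

open Finset Real Filter

theorem Nat.dvd_add_sub_iff_mod_eq {k r : ℕ} (hr : r < k) (x : ℕ) :
    k ∣ x + (k - r) ↔ x % k = r := by
  have hmod : x % k = r ↔ x ≡ r [MOD k] := by rw [Nat.ModEq, Nat.mod_eq_of_lt hr]
  have hk : r + (k - r) ≡ 0 [MOD k] := by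
    rw [Nat.add_sub_cancel' hr.le]; exact Nat.modEq_zero_iff_dvd.mpr dvd_rfl
  rw [hmod, ← Nat.modEq_zero_iff_dvd]
  exact ⟨fun h ↦ Nat.ModEq.add_right_cancel' _ (h.trans hk.symm),
    fun h ↦ (h.add_right _).trans hk⟩

section RootsOfUnityFilter

variable {R : Type*} [CommRing R] [IsDomain R] {ζ : R} {k : ℕ}

theorem IsPrimitiveRoot.sum_pow_mul_eq_ite_dvd (hζ : IsPrimitiveRoot ζ k) (m : ℕ) :
    ∑ j ∈ range k, ζ ^ (j * m) = if k ∣ m then (k : R) else 0 := by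
  simp_rw [mul_comm _ m, pow_mul]
  split_ifs with hm
  · simp [(hζ.pow_eq_one_iff_dvd m).mpr hm]
  · have hne : ζ ^ m - 1 ≠ 0 := sub_ne_zero.mpr fun h ↦ hm ((hζ.pow_eq_one_iff_dvd m).mp h)
    have hgeom := mul_geom_sum (ζ ^ m) k
    rw [← pow_mul, mul_comm m k, pow_mul, hζ.pow_eq_one, one_pow, sub_self] at hgeom
    exact (mul_eq_zero.mp hgeom).resolve_left hne

/-- Roots-of-unity filter; `ζ ^ (k - r)` stands for `ζ⁻ʳ`. -/
theorem IsPrimitiveRoot.sum_pow_mul_sum_eq_sum_ite_mod (hζ : IsPrimitiveRoot ζ k) {r : ℕ}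
    (hr : r < k) (s : Finset ℕ) (a : ℕ → R) :
    ∑ j ∈ range k, ζ ^ (j * (k - r)) * ∑ x ∈ s, a x * ζ ^ (j * x) =
      k * ∑ x ∈ s, if x % k = r then a x else 0 := by
  have hterm : ∀ j x, ζ ^ (j * (k - r)) * (a x * ζ ^ (j * x)) =
      a x * ζ ^ (j * (x + (k - r))) := by
    intro j x; rw [mul_add, pow_add]; ring
  simp_rw [mul_sum, hterm]
  rw [sum_comm]
  simp_rw [← mul_sum, hζ.sum_pow_mul_eq_ite_dvd, Nat.dvd_add_sub_iff_mod_eq hr]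
  rw [mul_sum]
  refine sum_congr rfl fun x _ ↦ ?_
  split_ifs <;> ring

theorem add_mul_pow_eq_sum_choose {S : Type*} [CommSemiring S] (q p z : S) (n : ℕ) :
    (q + p * z) ^ n = ∑ x ∈ range (n + 1), n.choose x * p ^ x * q ^ (n - x) * z ^ x := by
  rw [add_comm, add_pow]
  refine sum_congr rfl fun x _ ↦ ?_
  ring

theorem IsPrimitiveRoot.sum_pow_mul_binomial_eq (hζ : IsPrimitiveRoot ζ k) {r : ℕ} (hr : r < k)
    (p : R) (n : ℕ) :
    ∑ j ∈ range k, ζ ^ (j * (k - r)) * (1 - p + p * ζ ^ j) ^ n =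
      k * ∑ x ∈ range (n + 1),
        if x % k = r then n.choose x * p ^ x * (1 - p) ^ (n - x) else 0 := by
  simp_rw [add_mul_pow_eq_sum_choose, ← pow_mul]
  exact hζ.sum_pow_mul_sum_eq_sum_ite_mod hr _ _

end RootsOfUnityFilter

theorem norm_sq_one_sub_add_mul_exp_mul_I (p θ : ℝ) :
    ‖(1 - p : ℂ) + p * Complex.exp (θ * Complex.I)‖ ^ 2 = 1 - 2 * p * (1 - p) * (1 - cos θ) := by
  have hcoords : (1 - p : ℂ) + p * Complex.exp (θ * Complex.I) =
      ((1 - p + p * cos θ : ℝ) : ℂ) + (p * sin θ : ℝ) * Complex.I := by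
    rw [Complex.exp_mul_I, ← Complex.ofReal_cos, ← Complex.ofReal_sin]; push_cast; ring
  rw [← Complex.normSq_eq_norm_sq, hcoords, Complex.normSq_add_mul_I]
  linear_combination p ^ 2 * sin_sq_add_cos_sq θ

theorem two_div_le_sin_pi_mul_div {j k : ℕ} (hj : 0 < j) (hjk : j < k) :
    2 / k ≤ sin (π * j / k) := by
  have hk : (0 : ℝ) < k := by exact_mod_cast hj.trans hjk
  have hj' : (1 : ℝ) ≤ j := by exact_mod_cast hj
  have hjk' : (j : ℝ) + 1 ≤ k := by exact_mod_cast hjk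
  have jordan : ∀ i : ℝ, 1 ≤ i → π * i / k ≤ π / 2 → 2 / k ≤ sin (π * i / k) := fun i hi hle ↦
    calc 2 / (k : ℝ) ≤ 2 / π * (π * i / k) := by
          rw [show 2 / π * (π * i / k) = 2 * i / k by field_simp]; gcongr; linarith
      _ ≤ sin (π * i / k) := mul_le_sin (by positivity) hle
  rcases le_total (π * j / k) (π / 2) with hle | hge
  · exact jordan j hj' hle
  · have hsymm : π * j / k = π - π * (k - j) / k := by field_simp; ring
    rw [hsymm, sin_pi_sub]
    exact jordan _ (by linarith) (by linarith)

theorem eight_div_sq_le_one_sub_cos {j k : ℕ} (hj : 0 < j) (hjk : j < k) :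
    8 / (k : ℝ) ^ 2 ≤ 1 - cos (2 * π * j / k) := by
  have hsin := two_div_le_sin_pi_mul_div hj hjk
  have hcos : cos (2 * π * j / k) = 1 - 2 * sin (π * j / k) ^ 2 := by
    rw [show 2 * π * j / k = 2 * (π * j / k) by ring, cos_two_mul, cos_sq']; ring
  have h0 : (0 : ℝ) ≤ 2 / k := by positivity
  rw [hcos, show 8 / (k : ℝ) ^ 2 = 2 * (2 / k) ^ 2 by ring]
  nlinarith

theorem norm_one_sub_add_mul_exp_pow_le {p : ℝ} (hp0 : 0 ≤ p) (hp1 : p ≤ 1) {j k : ℕ}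
    (hj : 0 < j) (hjk : j < k) :
    ‖(1 - p : ℂ) + p * Complex.exp (2 * π * Complex.I / k) ^ j‖ ≤
      exp (-(8 * p * (1 - p) / k ^ 2)) := by
  have hexp : Complex.exp (2 * π * Complex.I / k) ^ j =
      Complex.exp ((2 * π * j / k : ℝ) * Complex.I) := by
    rw [← Complex.exp_nat_mul]; congr 1; push_cast; ring
  have hpq : 0 ≤ 2 * p * (1 - p) := by nlinarith
  rw [← pow_le_pow_iff_left₀ (norm_nonneg _) (exp_pos _).le two_ne_zero, hexp,
    norm_sq_one_sub_add_mul_exp_mul_I]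
  calc 1 - 2 * p * (1 - p) * (1 - cos (2 * π * j / k))
      ≤ 1 - 2 * p * (1 - p) * (8 / k ^ 2) := by
        gcongr; exact eight_div_sq_le_one_sub_cos hj hjk
    _ ≤ exp (-(2 * p * (1 - p) * (8 / k ^ 2))) := one_sub_le_exp_neg _
    _ = exp (-(8 * p * (1 - p) / k ^ 2)) ^ 2 := by rw [← exp_nat_mul]; push_cast; ring_nf

theorem abs_sum_binomial_mod_sub_inv_le {p : ℝ} (hp0 : 0 ≤ p) (hp1 : p ≤ 1) {k r : ℕ}
    (hr : r < k) (n : ℕ) :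
    |(∑ x ∈ range (n + 1),
        if x % k = r then (n.choose x : ℝ) * p ^ x * (1 - p) ^ (n - x) else 0) - 1 / k| ≤
      exp (-(8 * p * (1 - p) * n / k ^ 2)) := by
  set S := ∑ x ∈ range (n + 1),
    if x % k = r then (n.choose x : ℝ) * p ^ x * (1 - p) ^ (n - x) else 0
  set ζ := Complex.exp (2 * π * Complex.I / k)
  have hk : 0 < k := by omega
  have hζ : IsPrimitiveRoot ζ k := Complex.isPrimitiveRoot_exp k hk.ne'
  set term : ℕ → ℂ := fun j ↦ ζ ^ (j * (k - r)) * (1 - p + p * ζ ^ j) ^ n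
  have hfilter : (k : ℂ) * S = 1 + ∑ j ∈ Ico 1 k, term j := by
    have h := hζ.sum_pow_mul_binomial_eq hr (p : ℂ) n
    rw [sum_range_eq_add_Ico _ hk] at h
    simp only [term, S, Complex.ofReal_sum, apply_ite ((↑) : ℝ → ℂ)]
    push_cast
    simpa using h.symm
  have hterm : ∀ j ∈ Ico 1 k, ‖term j‖ ≤ exp (-(8 * p * (1 - p) * n / k ^ 2)) := by
    intro j hj
    obtain ⟨hj0, hjk⟩ := mem_Ico.mp hj
    calc ‖term j‖ = ‖1 - p + p * ζ ^ j‖ ^ n := by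
          rw [norm_mul, norm_pow, hζ.norm'_eq_one hk.ne', one_pow, one_mul, norm_pow]
      _ ≤ exp (-(8 * p * (1 - p) / k ^ 2)) ^ n :=
          pow_le_pow_left₀ (norm_nonneg _) (norm_one_sub_add_mul_exp_pow_le hp0 hp1 hj0 hjk) n
      _ = exp (-(8 * p * (1 - p) * n / k ^ 2)) := by rw [← exp_nat_mul]; ring_nf
  have hkS : ‖(k : ℂ) * S - 1‖ ≤ k * exp (-(8 * p * (1 - p) * n / k ^ 2)) := by
    rw [hfilter, add_sub_cancel_left]
    refine (norm_sum_le_of_le _ hterm).trans ?_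
    rw [sum_const, Nat.card_Ico, nsmul_eq_mul]
    gcongr
    exact_mod_cast Nat.sub_le k 1
  have hkpos : (0 : ℝ) < k := by exact_mod_cast hk
  have hnorm : ‖(k : ℂ) * S - 1‖ = |k * S - 1| := by
    rw [← Real.norm_eq_abs, ← Complex.norm_real]; push_cast; rfl
  rw [show S - 1 / k = (k * S - 1) / k by field_simp, abs_div, abs_of_pos hkpos,
    div_le_iff₀' hkpos, ← hnorm]
  exact hkS

/-- For `p ∈ (0,1)` and `ε > 0` there exists `k₀` such that for all
`k ≥ k₀`, all `n ≥ k³/6` and all `0 ≤ r ≤ k-1`, a binomial random variable `X` with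
parameters `n` and `p` satisfies `|ℙ(X ≡ r mod k) - 1/k| ≤ ε/k`. -/
theorem binomial_mod_uniform :
    ∀ p ε : ℝ, 0 < p → p < 1 → 0 < ε →
      ∃ k₀ : ℕ, ∀ k : ℕ, k₀ ≤ k → ∀ n r : ℕ,
        (k : ℝ) ^ 3 / 6 ≤ (n : ℝ) → r < k →
        |(∑ x ∈ Finset.range (n + 1),
            if x % k = r then (n.choose x : ℝ) * p ^ x * (1 - p) ^ (n - x) else 0) -
          1 / (k : ℝ)| ≤ ε / (k : ℝ) := by
  intro p ε hp0 hp1 hε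
  set c := 4 * p * (1 - p) / 3
  have hc : 0 < c := by have := sub_pos.mpr hp1; positivity
  obtain ⟨k₀, hk₀⟩ : ∃ k₀ : ℕ, ∀ k ≥ k₀, (k : ℝ) * exp (-c * k) ≤ ε := by
    have h := (tendsto_rpow_mul_exp_neg_mul_atTop_nhds_zero 1 c hc).comp tendsto_natCast_atTop_atTop
    simpa using eventually_atTop.mp (h.eventually (ge_mem_nhds hε))
  refine ⟨k₀, fun k hk n r hn hr ↦ ?_⟩
  have hkpos : (0 : ℝ) < k := by exact_mod_cast (Nat.zero_le r).trans_lt hr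
  calc _ ≤ exp (-(8 * p * (1 - p) * n / k ^ 2)) :=
        abs_sum_binomial_mod_sub_inv_le hp0.le hp1.le hr n
    _ ≤ exp (-c * k) := by
        rw [exp_le_exp, neg_mul, neg_le_neg_iff, le_div_iff₀ (by positivity)]
        have hpq : 0 ≤ p * (1 - p) := by nlinarith
        calc c * k * k ^ 2 = 8 * (p * (1 - p)) * (k ^ 3 / 6) := by simp only [c]; ring
          _ ≤ 8 * (p * (1 - p)) * n := by gcongr
          _ = 8 * p * (1 - p) * n := by ring
    _ ≤ ε / k := by rw [le_div_iff₀ hkpos, mul_comm]; exact hk₀ k hk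
end

section
/- For all μ, ν with 0 < μ ≤ ν < 1 there exists n₀ such that for all n ≥ n₀: if G is a tournament on n vertices which is not a robust (μ,ν)-outexpander, then V(G) can be partitioned into sets S and S' such that νn < |S| < (1−ν)n, νn < |S'| < (1−ν)n, and the number of edges of G directed from S to S' is at most 4μn². -/
/-- `G` restricted to `S` is a tournament: no loops, and for distinct vertices of `S`
exactly one of the two possible directed edges is present. -/
def IsTournamentOn {V : Type*} (G : V → V → Prop) (S : Set V) : Prop :=
  (∀ v ∈ S, ¬ G v v) ∧ ∀ u ∈ S, ∀ v ∈ S, u ≠ v → (G u v ↔ ¬ G v u)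

/-- `G` is a tournament. -/
def IsTournament {V : Type*} (G : V → V → Prop) : Prop :=
  IsTournamentOn G Set.univ

/-- `T` is a directed tree: at most one orientation of each edge is present and
the underlying graph is a tree. -/
def IsDirectedTree {V : Type*} (T : V → V → Prop) : Prop :=
  (∀ u v : V, T u v → ¬ T v u) ∧ (SimpleGraph.fromRel T).IsTree

/-- `f` is a copy of the digraph `T` inside the digraph `G`. -/
def IsCopy {U V : Type*} (T : U → U → Prop) (G : V → V → Prop) (f : U → V) : Prop :=
  Function.Injective f ∧ ∀ a b : U, T a b → G (f a) (f b)

/-- The maximum degree of the underlying graph of the digraph `T` is at most `Δ`. -/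
def MaxDegreeLE {V : Type*} (T : V → V → Prop) (Δ : ℕ) : Prop :=
  ∀ v : V, ({w : V | T v w ∨ T w v} : Set V).ncard ≤ Δ

/-- The number of edges of `G` directed from `X` to `Y`. -/
noncomputable def eCount {V : Type*} (G : V → V → Prop) (X Y : Set V) : ℕ :=
  ({p : V × V | p.1 ∈ X ∧ p.2 ∈ Y ∧ G p.1 p.2} : Set (V × V)).ncard

/-- The density of the edges of `G` directed from `X` to `Y`. -/
noncomputable def density {V : Type*} (G : V → V → Prop) (X Y : Set V) : ℝ :=
  (eCount G X Y : ℝ) / ((X.ncard : ℝ) * (Y.ncard : ℝ))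

/-- The pair `(X, Y)` is `ε`-regular (for the edges directed from `X` to `Y`). -/
def IsRegularPair {V : Type*} (G : V → V → Prop) (ε : ℝ) (X Y : Set V) : Prop :=
  ∀ X' ⊆ X, ∀ Y' ⊆ Y, ε * (X.ncard : ℝ) ≤ (X'.ncard : ℝ) →
    ε * (Y.ncard : ℝ) ≤ (Y'.ncard : ℝ) →
    |density G X' Y' - density G X Y| < ε

/-- `G` restricted to the clusters `C 0, …, C (k-1)` (each of size `m`, pairwise disjoint)
is an `ε`-regular `d`-dense cycle of cluster tournaments. -/
def IsClusterCycle {V : Type*} (G : V → V → Prop) (ε d : ℝ) {k : ℕ}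
    (C : ZMod k → Set V) (m : ℕ) : Prop :=
  (∀ i, (C i).ncard = m) ∧
  ((Set.univ : Set (ZMod k)).Pairwise fun i j => Disjoint (C i) (C j)) ∧
  (∀ i, IsTournamentOn G (C i)) ∧
  (∀ i, IsRegularPair G ε (C i) (C (i + 1)) ∧ d ≤ density G (C i) (C (i + 1)))

/-- `G` is a robust `(μ, ν)`-outexpander. -/
def RobustOutexpander {V : Type*} [Fintype V] (G : V → V → Prop) (μ ν : ℝ) : Prop :=
  ∀ S : Set V, ν * (Fintype.card V : ℝ) < (S.ncard : ℝ) →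
    (S.ncard : ℝ) < (1 - ν) * (Fintype.card V : ℝ) →
    (S.ncard : ℝ) + μ * (Fintype.card V : ℝ) ≤
      (({v : V | μ * (Fintype.card V : ℝ) ≤ (({u ∈ S | G u v} : Set V).ncard : ℝ)} :
          Set V).ncard : ℝ)

/-- The minimum semidegree of `G` is at least `x`. -/
def MinSemidegreeGE {V : Type*} (G : V → V → Prop) (x : ℝ) : Prop :=
  ∀ v : V, x ≤ (({u : V | G v u} : Set V).ncard : ℝ) ∧
    x ≤ (({u : V | G u v} : Set V).ncard : ℝ)

section Aux
open Finset
attribute [local instance 2000] Classical.propDecidable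

lemma sum_fibers' {V : Type*} (G : V → V → Prop) (X Y : Finset V) :
    ((X ×ˢ Y).filter fun p => G p.1 p.2).card = ∑ v ∈ Y, (X.filter fun u => G u v).card := by
  rw [Finset.card_filter, Finset.sum_product, Finset.sum_comm]
  exact Finset.sum_congr rfl fun v _ => (Finset.card_filter _ _).symm

lemma tour_dc {V : Type*} {G : V → V → Prop} {t : Finset V}
    (h0 : ∀ v ∈ t, ¬ G v v)
    (h1 : ∀ u ∈ t, ∀ v ∈ t, u ≠ v → (G u v ↔ ¬ G v u)) :
    2 * ((t ×ˢ t).filter fun p => G p.1 p.2).card = t.card * t.card - t.card := by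
  classical
  have hP : ((t ×ˢ t).filter fun p => G p.1 p.2) = t.offDiag.filter fun p => G p.1 p.2 := by
    ext p
    simp only [Finset.mem_filter, Finset.mem_product, Finset.mem_offDiag]
    constructor
    · rintro ⟨⟨h1', h2'⟩, hg⟩
      exact ⟨⟨h1', h2', fun he => h0 p.1 h1' (he ▸ hg)⟩, hg⟩
    · rintro ⟨⟨a, b, _⟩, hg⟩; exact ⟨⟨a, b⟩, hg⟩
  set P := t.offDiag.filter fun p => G p.1 p.2 with hPdef
  set Q := t.offDiag.filter fun p => G p.2 p.1 with hQdef
  have hdisj : Disjoint P Q := by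
    rw [Finset.disjoint_left]
    rintro p hp hq
    simp only [hPdef, hQdef, Finset.mem_filter, Finset.mem_offDiag] at hp hq
    exact ((h1 p.1 hp.1.1 p.2 hp.1.2.1 hp.1.2.2).1 hp.2) hq.2
  have hunion : P ∪ Q = t.offDiag := by
    ext p
    simp only [hPdef, hQdef, Finset.mem_union, Finset.mem_filter, Finset.mem_offDiag]
    constructor
    · rintro (h | h) <;> exact h.1
    · intro h
      by_cases hg : G p.1 p.2
      · exact Or.inl ⟨h, hg⟩
      · exact Or.inr ⟨h, ((h1 p.2 h.2.1 p.1 h.1 (Ne.symm h.2.2)).2 (by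
          intro hgg; exact hg hgg) : G p.2 p.1)⟩
  have hcardPQ : P.card = Q.card := by
    apply Finset.card_bij' (fun p _ => Prod.swap p) (fun p _ => Prod.swap p)
    · intro p hp
      simp only [hPdef, hQdef, Finset.mem_filter, Finset.mem_offDiag] at hp ⊢
      exact ⟨⟨hp.1.2.1, hp.1.1, (Ne.symm hp.1.2.2)⟩, hp.2⟩
    · intro p hp
      simp only [hPdef, hQdef, Finset.mem_filter, Finset.mem_offDiag] at hp ⊢
      exact ⟨⟨hp.1.2.1, hp.1.1, (Ne.symm hp.1.2.2)⟩, hp.2⟩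
    · intro p _; rfl
    · intro p _; rfl
  have := Finset.card_union_of_disjoint hdisj
  rw [hunion] at this
  rw [Finset.offDiag_card] at this
  rw [hP]
  omega

lemma eCount_eq_card {V : Type*} [Fintype V] (G : V → V → Prop) (X Y : Set V) :
    eCount G X Y = ((X.toFinset ×ˢ Y.toFinset).filter fun p => G p.1 p.2).card := by
  rw [eCount, ← Set.ncard_coe_finset]
  congr 1
  ext p
  simp only [Finset.coe_filter, Finset.mem_product, Set.mem_toFinset, Set.mem_setOf_eq]
  tauto

lemma eCount_union_le {V : Type*} [Fintype V] (G : V → V → Prop) (X A B : Set V) :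
    eCount G X (A ∪ B) ≤ eCount G X A + eCount G X B := by
  rw [eCount, eCount, eCount]
  refine le_trans (Set.ncard_le_ncard ?_ (Set.toFinite _)) (Set.ncard_union_le _ _)
  rintro ⟨u,v⟩ ⟨h1, h2, h3⟩
  cases h2 with
  | inl h => exact Or.inl ⟨h1, h, h3⟩
  | inr h => exact Or.inr ⟨h1, h, h3⟩

lemma eCount_le_mul {V : Type*} [Fintype V] (G : V → V → Prop) (X Y : Set V) :
    eCount G X Y ≤ X.ncard * Y.ncard := by
  rw [eCount_eq_card, Set.ncard_eq_toFinset_card', Set.ncard_eq_toFinset_card']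
  exact le_trans (Finset.card_le_card (Finset.filter_subset _ _))
    (le_of_eq (Finset.card_product _ _))

lemma eCount_le_of_fiber_le {V : Type*} [Fintype V] (G : V → V → Prop) (X Y : Set V)
    (B : ℝ) (hB : ∀ v ∈ Y, (({u ∈ X | G u v} : Set V).ncard : ℝ) ≤ B) :
    (eCount G X Y : ℝ) ≤ Y.ncard * B := by
  rw [eCount_eq_card, sum_fibers']
  push_cast
  calc ∑ v ∈ Y.toFinset, ((X.toFinset.filter fun u => G u v).card : ℝ)
      ≤ ∑ _v ∈ Y.toFinset, B := by
        refine Finset.sum_le_sum fun v hv => ?_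
        refine le_trans ?_ (hB v (Set.mem_toFinset.mp hv))
        rw [Set.ncard_eq_toFinset_card']
        norm_cast
        apply Finset.card_le_card
        intro u hu
        simp only [Finset.mem_filter, Set.mem_toFinset, Set.mem_setOf_eq] at hu ⊢
        exact ⟨hu.1, hu.2⟩
    _ = Y.ncard * B := by
        rw [Finset.sum_const, Set.ncard_eq_toFinset_card', nsmul_eq_mul]

lemma numfin (μ ν m : ℝ) (hν0 : 0 ≤ ν*m) (h9 : m ≤ 3*μ*ν*m*m) :
    m*(μ*m) + ((1-ν)*m)*(3*μ*m+1) ≤ 4*μ*m^2 := by nlinarith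

/-- If a tournament on `n` vertices is not a robust `(μ,ν)`-outexpander
then its vertex set can be partitioned into `S` and `S'` with `νn < |S|, |S'| < (1-ν)n`
and at most `4μn²` edges directed from `S` to `S'`. -/
theorem not_robust_outexpander_split :
    ∀ μ ν : ℝ, 0 < μ → μ ≤ ν → ν < 1 →
      ∃ n₀ : ℕ, ∀ n : ℕ, n₀ ≤ n →
        ∀ (V : Type) [Fintype V], ∀ G : V → V → Prop,
          Fintype.card V = n → IsTournament G → ¬ RobustOutexpander G μ ν →
          ∃ S S' : Set V, S ∪ S' = Set.univ ∧ Disjoint S S' ∧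
            ν * (n : ℝ) < (S.ncard : ℝ) ∧ (S.ncard : ℝ) < (1 - ν) * (n : ℝ) ∧
            ν * (n : ℝ) < (S'.ncard : ℝ) ∧ (S'.ncard : ℝ) < (1 - ν) * (n : ℝ) ∧
            (eCount G S S' : ℝ) ≤ 4 * μ * (n : ℝ) ^ 2 := by
  intro μ ν hμ hμν hν
  refine ⟨⌈1/(3*μ^2)⌉₊ + 1, fun n hn V _ G hcard hTour hnR => ?_⟩
  classical
  subst hcard
  set n : ℕ := Fintype.card V with hndef
  -- basic numeric facts
  have hm0 : (0:ℝ) ≤ (n:ℝ) := Nat.cast_nonneg n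
  have hm1 : (1:ℝ) ≤ 3*μ^2 * n := by
    have h1 : (1:ℝ)/(3*μ^2) ≤ (⌈1/(3*μ^2)⌉₊ : ℝ) := Nat.le_ceil _
    have h2 : ((⌈1/(3*μ^2)⌉₊ : ℕ) : ℝ) ≤ (n:ℝ) := by
      exact_mod_cast le_trans (Nat.le_succ _) hn
    have h3 : (0:ℝ) < 3*μ^2 := by positivity
    rw [div_le_iff₀ h3] at h1
    nlinarith
  rw [RobustOutexpander] at hnR
  push_neg at hnR
  obtain ⟨S, hS1, hS2, hR⟩ := hnR
  set R : Set V := {v : V | μ * (n:ℝ) ≤ (({u ∈ S | G u v} : Set V).ncard : ℝ)} with hRdef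
  obtain ⟨h0, h1⟩ := hTour
  -- cardinal of complement
  have hcompl : S.ncard + Sᶜ.ncard = n := by
    rw [hndef, ← Nat.card_eq_fintype_card]
    exact Set.ncard_add_ncard_compl S
  have hcomplR : (Sᶜ.ncard : ℝ) = (n:ℝ) - S.ncard := by
    have := congrArg (fun k : ℕ => (k:ℝ)) hcompl
    push_cast at this
    linarith
  have hSn : (S.ncard : ℝ) ≤ (n:ℝ) := by
    have : S.ncard ≤ n := by omega
    exact_mod_cast this
  refine ⟨S, Sᶜ, Set.union_compl_self S, disjoint_compl_right, hS1, hS2, ?_, ?_, ?_⟩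
  · rw [hcomplR]; linarith
  · rw [hcomplR]; linarith
  -- the edge bound
  set T : Set V := S \ R with hTdef
  -- double counting on T
  have hTbound : (T.ncard : ℝ) ≤ 2*μ*(n:ℝ) + 1 := by
    have hdc := tour_dc (G := G) (t := T.toFinset)
      (fun v _ => h0 v (Set.mem_univ v))
      (fun u _ v _ huv => h1 u (Set.mem_univ u) v (Set.mem_univ v) huv)
    rw [sum_fibers'] at hdc
    set tc := T.toFinset.card with htc
    have htcT : T.ncard = tc := Set.ncard_eq_toFinset_card' T
    have hsum : (∑ v ∈ T.toFinset, (T.toFinset.filter fun u => G u v).card : ℝ)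
        ≤ tc * (μ * n) := by
      calc (∑ v ∈ T.toFinset, ((T.toFinset.filter fun u => G u v).card : ℝ))
          ≤ ∑ _v ∈ T.toFinset, (μ * n) := by
            refine Finset.sum_le_sum fun v hv => ?_
            have hvT : v ∈ T := Set.mem_toFinset.mp hv
            have hvR : ¬ (μ * (n:ℝ) ≤ (({u ∈ S | G u v} : Set V).ncard : ℝ)) := hvT.2
            push_neg at hvR
            refine le_trans ?_ (le_of_lt hvR)
            rw [Set.ncard_eq_toFinset_card']
            norm_cast
            apply Finset.card_le_card
            intro u hu
            simp only [Finset.mem_filter, Set.mem_toFinset, Set.mem_setOf_eq] at hu ⊢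
            exact ⟨hu.1.1, hu.2⟩
        _ = tc * (μ * n) := by rw [Finset.sum_const, nsmul_eq_mul]
    have hle : tc ≤ tc * tc := by
      rcases Nat.eq_zero_or_pos tc with h | h
      · simp [h]
      · exact Nat.le_mul_of_pos_left _ h
    have hdcR := congrArg (Nat.cast : ℕ → ℝ) hdc
    push_cast [Nat.cast_sub hle] at hdcR
    rw [htcT]
    rcases Nat.eq_zero_or_pos tc with h | h
    · rw [h]; push_cast; positivity
    · have htc1 : (1:ℝ) ≤ (tc:ℝ) := by exact_mod_cast h
      have key : (tc:ℝ) * tc - tc ≤ 2 * (tc * (μ * n)) := by linarith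
      by_contra hcon
      push_neg at hcon
      have h4 : (0:ℝ) < (tc:ℝ) * ((tc:ℝ) - 1 - 2*μ*n) :=
        mul_pos (by linarith) (by linarith)
      nlinarith [key, h4]
  -- cardinality of R \ S
  have hRsplit : (R ∩ S).ncard + (R \ S).ncard = R.ncard :=
    Set.ncard_inter_add_ncard_diff_eq_ncard R S
  have hSsplit : (S ∩ R).ncard + (S \ R).ncard = S.ncard :=
    Set.ncard_inter_add_ncard_diff_eq_ncard S R
  have hRS : ((R \ S).ncard : ℝ) ≤ 3*μ*(n:ℝ) + 1 := by
    have e1 : (((R ∩ S)).ncard:ℝ) + ((R \ S).ncard:ℝ) = (R.ncard:ℝ) := by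
      exact_mod_cast hRsplit
    have e2 : (((S ∩ R)).ncard:ℝ) + (T.ncard:ℝ) = (S.ncard:ℝ) := by
      exact_mod_cast hSsplit
    rw [Set.inter_comm S R] at e2
    linarith
  -- split the edge count
  have hcover : Sᶜ = (Sᶜ \ R) ∪ (Sᶜ ∩ R) := (Set.diff_union_inter _ _).symm
  have hsplitE : (eCount G S Sᶜ : ℝ) ≤ (eCount G S (Sᶜ \ R) : ℝ) + (eCount G S (Sᶜ ∩ R) : ℝ) := by
    have h := eCount_union_le G S (Sᶜ \ R) (Sᶜ ∩ R)
    rw [← hcover] at h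
    exact_mod_cast h
  have h5 : (eCount G S (Sᶜ \ R) : ℝ) ≤ ((Sᶜ \ R).ncard : ℝ) * (μ * n) := by
    refine eCount_le_of_fiber_le G S _ _ fun v hv => ?_
    exact le_of_lt (not_le.mp hv.2)
  have h5' : ((Sᶜ \ R).ncard : ℝ) ≤ (n:ℝ) := by
    have : (Sᶜ \ R).ncard ≤ Sᶜ.ncard := Set.ncard_le_ncard Set.diff_subset (Set.toFinite _)
    have h2 : (Sᶜ \ R).ncard ≤ n := by omega
    exact_mod_cast h2
  have h6 : (eCount G S (Sᶜ ∩ R) : ℝ) ≤ (S.ncard : ℝ) * ((Sᶜ ∩ R).ncard : ℝ) := by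
    exact_mod_cast eCount_le_mul G S _
  have h7 : Sᶜ ∩ R = R \ S := by rw [Set.inter_comm, Set.diff_eq]
  rw [h7] at h6 hsplitE
  -- numerics
  have hμn : (0:ℝ) ≤ μ * n := by positivity
  have hRS0 : (0:ℝ) ≤ ((R \ S).ncard : ℝ) := Nat.cast_nonneg _
  have hS0 : (0:ℝ) ≤ (S.ncard : ℝ) := Nat.cast_nonneg _
  have h8 : (1:ℝ) ≤ 3*μ*ν*(n:ℝ) := by
    refine le_trans hm1 ?_
    have hh : μ*μ ≤ μ*ν := mul_le_mul_of_nonneg_left hμν (le_of_lt hμ)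
    have hh2 := mul_le_mul_of_nonneg_right hh hm0
    calc 3*μ^2*(n:ℝ) = 3*((μ*μ)*n) := by ring
      _ ≤ 3*((μ*ν)*n) := by linarith
      _ = 3*μ*ν*n := by ring
  have h9 : (n:ℝ) ≤ 3*μ*ν*(n:ℝ)*(n:ℝ) := by
    have := mul_le_mul_of_nonneg_right h8 hm0
    calc (n:ℝ) = 1*(n:ℝ) := (one_mul _).symm
      _ ≤ 3*μ*ν*(n:ℝ)*(n:ℝ) := this
  have h10 : (eCount G S (Sᶜ \ R) : ℝ) ≤ (n:ℝ) * (μ * n) :=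
    le_trans h5 (mul_le_mul_of_nonneg_right h5' hμn)
  have h11 : (S.ncard : ℝ) * ((R \ S).ncard : ℝ) ≤ ((1-ν)*n) * (3*μ*n + 1) := by
    apply mul_le_mul (le_of_lt hS2) hRS hRS0 (by linarith)
  have hν0 : (0:ℝ) ≤ ν*(n:ℝ) := mul_nonneg (by linarith) hm0
  have hfin : (n:ℝ)*(μ*(n:ℝ)) + ((1-ν)*(n:ℝ))*(3*μ*(n:ℝ)+1) ≤ 4*μ*(n:ℝ)^2 :=
    numfin μ ν (n:ℝ) hν0 h9
  linarith [hsplitE, h10, le_trans h6 h11, hfin]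

end Aux
end

section
/- Let T be a tree on n ≥ 3 vertices. Then there exist subtrees T' and T'' of T such that T' and T'' intersect in precisely one vertex of T, every edge of T lies in precisely one of T' and T'', and both e(T') ≥ e(T)/3 and e(T'') ≥ e(T)/3, where e(·) denotes the number of edges. -/
/-!
Take a centroid `v` of `T`: every branch at `v` (a component of `T - v` together with its edge
to `v`) has at most `n / 2` vertices, hence at most two thirds of the `m = n - 1` edges once
`n ≥ 3`. Among the sets of branches carrying at least `m / 3` edges, a smallest one carries at
most `2m / 3` of them: otherwise dropping one of its branches would still leave `m / 3`, unless
that single branch already carries `m / 3` and can be taken alone. The union of the chosen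
branches and the union of the others are subtrees meeting only in `v`. Edges are counted
through vertices, a connected graph on `k` vertices having at least `k - 1` edges.
-/

open Set

lemma Set.ncard_preimage_finset {α β : Type*} [Finite α] (f : α → β) (t : Finset β) :
    (f ⁻¹' ↑t).ncard = ∑ b ∈ t, (f ⁻¹' {b}).ncard := by
  rw [← biUnion_preimage_singleton, t.finite_toSet.ncard_biUnion (fun _ _ => toFinite _)
    (pairwiseDisjoint_fiber f _), finsum_mem_coe_finset]

theorem Finset.exists_subset_sum_between_thirds {ι : Type*} [DecidableEq ι] (s : Finset ι)
    (c : ι → ℕ) (hc : ∀ i ∈ s, 3 * c i ≤ 2 * ∑ j ∈ s, c j) :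
    ∃ t ⊆ s, ∑ j ∈ s, c j ≤ 3 * ∑ i ∈ t, c i ∧ 3 * ∑ i ∈ t, c i ≤ 2 * ∑ j ∈ s, c j := by
  set m := ∑ j ∈ s, c j
  obtain ⟨t, ht, hmin⟩ := Finset.exists_min_image
    (s.powerset.filter fun t => m ≤ 3 * ∑ i ∈ t, c i) Finset.card
    ⟨s, Finset.mem_filter.2 ⟨Finset.mem_powerset.2 subset_rfl, by omega⟩⟩
  simp only [Finset.mem_filter, Finset.mem_powerset] at ht hmin
  obtain ⟨hts, htm⟩ := ht
  rcases t.eq_empty_or_nonempty with rfl | ⟨i, hi⟩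
  · exact ⟨∅, Finset.empty_subset _, htm, by simp⟩
  by_cases hci : m ≤ 3 * c i
  · exact ⟨{i}, Finset.singleton_subset_iff.2 (hts hi), by simpa, by simpa using hc i (hts hi)⟩
  have herase : 3 * ∑ j ∈ t.erase i, c j < m := by
    by_contra! h
    exact (Finset.card_erase_lt_of_mem hi).not_ge
      (hmin _ ⟨(Finset.erase_subset i t).trans hts, h⟩)
  have := Finset.sum_erase_add t c hi
  exact ⟨t, hts, htm, by omega⟩

namespace SimpleGraph

variable {V : Type*} {G : SimpleGraph V}

lemma Subgraph.Connected.ncard_verts_le_ncard_edgeSet_add_one [Finite V] {H : G.Subgraph}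
    (h : H.Connected) :
    H.verts.ncard ≤ H.edgeSet.ncard + 1 := by
  have := h.coe.card_vert_le_card_edgeSet_add_one
  rwa [Nat.card_coe_set_eq, Nat.card_coe_set_eq, ← ncard_image_of_injective _
    (Sym2.map.injective Subtype.val_injective), Subgraph.image_coe_edgeSet_coe] at this

lemma edgeSet_induce_top_union {s t : Set V}
    (h : ∀ a b, G.Adj a b → (a ∈ s ∧ b ∈ s) ∨ (a ∈ t ∧ b ∈ t)) :
    ((⊤ : G.Subgraph).induce s).edgeSet ∪ ((⊤ : G.Subgraph).induce t).edgeSet = G.edgeSet := by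
  ext e
  induction e using Sym2.ind with
  | _ a b =>
    simp only [mem_union, Subgraph.mem_edgeSet, Subgraph.induce_adj, Subgraph.top_adj,
      mem_edgeSet]
    have := h a b
    tauto

lemma disjoint_edgeSet_induce_top {s t : Set V} (h : (s ∩ t).Subsingleton) :
    Disjoint ((⊤ : G.Subgraph).induce s).edgeSet ((⊤ : G.Subgraph).induce t).edgeSet := by
  rw [Set.disjoint_left]
  intro e h1 h2
  induction e using Sym2.ind with
  | _ a b =>
    simp only [Subgraph.mem_edgeSet, Subgraph.induce_adj, Subgraph.top_adj] at h1 h2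
    exact h1.2.2.ne (h ⟨h1.1, h2.1⟩ ⟨h1.2.1, h2.2.1⟩)

end SimpleGraph

namespace SimpleGraph.IsTree

variable {V : Type*} {T : SimpleGraph V} (hT : T.IsTree) {a b u v w x y : V}

noncomputable def treePath (v x : V) : T.Walk v x := (hT.existsUnique_path v x).exists.choose

lemma isPath_treePath (v x : V) : (hT.treePath v x).IsPath :=
  (hT.existsUnique_path v x).exists.choose_spec

lemma eq_treePath {p : T.Walk v x} (hp : p.IsPath) : p = hT.treePath v x :=
  (hT.existsUnique_path v x).unique hp (hT.isPath_treePath v x)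

lemma treePath_self (v : V) : hT.treePath v v = .nil :=
  (hT.eq_treePath .nil).symm

noncomputable def firstStep (v x : V) : V := (hT.treePath v x).snd

lemma firstStep_self (v : V) : hT.firstStep v v = v := by
  simp [firstStep, treePath_self]

lemma adj_firstStep (hx : x ≠ v) : T.Adj v (hT.firstStep v x) :=
  Walk.adj_snd (Walk.not_nil_of_ne hx.symm)

lemma firstStep_of_adj (h : T.Adj v u) : hT.firstStep v u = u := by
  rw [firstStep, ← hT.eq_treePath (Path.singleton h).isPath]
  rfl

lemma eq_firstStep_of_mem_support (h : T.Adj v w) (hw : w ∈ (hT.treePath v x).support) :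
    w = hT.firstStep v x :=
  hT.isAcyclic.eq_snd_of_adj_start (hT.isPath_treePath v x) h hw

lemma firstStep_eq_of_mem_support (hy : y ∈ (hT.treePath v x).support) (hyv : y ≠ v) :
    hT.firstStep v y = hT.firstStep v x := by
  classical
  rw [firstStep, ← hT.eq_treePath ((hT.isPath_treePath v x).takeUntil hy)]
  exact Walk.snd_takeUntil hyv _ hy

lemma firstStep_eq_firstStep_of_adj (ha : a ≠ v) (hb : b ≠ v) (hab : T.Adj a b) :
    hT.firstStep v a = hT.firstStep v b := by
  by_cases h : a ∈ (hT.treePath v b).support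
  · exact hT.firstStep_eq_of_mem_support h ha
  · have hb_mem := hT.isAcyclic.mem_support_of_ne_mem_support_of_adj_of_isPath
      (hT.isPath_treePath v a) (hT.isPath_treePath v b) hab h
    exact (hT.firstStep_eq_of_mem_support hb_mem hb).symm

lemma notMem_support_treePath_firstStep (hx : x ≠ v) :
    v ∉ (hT.treePath (hT.firstStep v x) x).support := by
  have hnil := Walk.not_nil_of_ne (p := hT.treePath v x) hx.symm
  have hp := hT.isPath_treePath v x
  rw [← Walk.cons_tail_eq _ hnil, Walk.cons_isPath_iff] at hp
  rw [firstStep, ← hT.eq_treePath hp.1]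
  exact hp.2

lemma firstStep_eq_iff_ne (huv : T.Adj u v) (x : V) :
    hT.firstStep v x = u ↔ hT.firstStep u x ≠ v := by
  rcases eq_or_ne x v with rfl | hxv
  · simp [hT.firstStep_self, hT.firstStep_of_adj huv, huv.ne']
  constructor
  · intro h hc
    have hv := hT.notMem_support_treePath_firstStep hxv
    rw [h, ← hc] at hv
    exact hv (Walk.getVert_mem_support _ 1)
  · intro h
    have hv : v ∉ (hT.treePath u x).support := fun hv =>
      h (hT.eq_firstStep_of_mem_support huv hv).symm
    rw [firstStep, ← hT.eq_treePath ((hT.isPath_treePath u x).cons hv (h := huv.symm))]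
    exact Walk.snd_cons _ _

/-- For a neighbour `u` of `v`, the vertex set of the component of `T - v` containing `u`. -/
def branch (v u : V) : Set V := hT.firstStep v ⁻¹' {u}

lemma compl_branch (huv : T.Adj u v) : (hT.branch v u)ᶜ = hT.branch u v := by
  ext x
  simp [branch, hT.firstStep_eq_iff_ne huv]

lemma branch_ssubset_branch (huv : T.Adj u v) (huw : T.Adj u w) (hwv : w ≠ v) :
    hT.branch u w ⊂ hT.branch v u := by
  have hsub : hT.branch u w ⊆ hT.branch v u := fun x hx =>
    (hT.firstStep_eq_iff_ne huv x).mpr (by simp_all [branch])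
  refine (ssubset_iff_of_subset hsub).mpr ⟨u, hT.firstStep_of_adj huv.symm, ?_⟩
  simp [branch, hT.firstStep_self, huw.ne]

lemma exists_centroid [Finite V] :
    ∃ v, ∀ u, T.Adj v u → 2 * (hT.branch v u).ncard ≤ Nat.card V := by
  by_contra! h
  have := hT.connected.nonempty
  obtain ⟨⟨v, u⟩, ⟨huv, hheavy⟩, hmin⟩ := Set.exists_min_image
    {p : V × V | T.Adj p.1 p.2 ∧ Nat.card V < 2 * (hT.branch p.1 p.2).ncard}
    (fun p => (hT.branch p.1 p.2).ncard) (toFinite _)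
    (by obtain ⟨u, hu⟩ := h (Classical.arbitrary V); exact ⟨(_, u), hu⟩)
  simp only [mem_ofPred_eq] at huv hheavy hmin
  obtain ⟨w, huw, hw⟩ := h u
  rcases eq_or_ne w v with rfl | hwv
  · have := ncard_add_ncard_compl (hT.branch w u)
    rw [hT.compl_branch huw] at this
    omega
  · have := ncard_lt_ncard (hT.branch_ssubset_branch huv.symm huw hwv)
    have : (hT.branch v u).ncard ≤ (hT.branch u w).ncard := hmin (u, w) ⟨huw, hw⟩
    omega

def branchUnion (v : V) (S : Set V) : Set V := insert v (hT.firstStep v ⁻¹' S)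

lemma support_treePath_subset_branchUnion {S : Set V} (hx : x ∈ hT.branchUnion v S) :
    {y | y ∈ (hT.treePath v x).support} ⊆ hT.branchUnion v S := by
  intro y hy
  rcases eq_or_ne y v with rfl | hyv
  · exact mem_insert _ _
  rcases hx with rfl | hx
  · simp [treePath_self, hyv] at hy
  · exact mem_insert_of_mem _ (by rwa [mem_preimage, hT.firstStep_eq_of_mem_support hy hyv])

lemma connected_induce_branchUnion (v : V) (S : Set V) :
    (T.induce (hT.branchUnion v S)).Connected :=
  induce_connected_of_patches v (mem_insert _ _) fun {x} hx =>
    ⟨_, hT.support_treePath_subset_branchUnion hx, Walk.start_mem_support _,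
      Walk.end_mem_support _, (hT.treePath v x).connected_induce_support.preconnected _ _⟩

lemma branchUnion_inter_compl (v : V) (S : Set V) :
    hT.branchUnion v S ∩ hT.branchUnion v Sᶜ = {v} := by
  ext x
  simp only [branchUnion, mem_inter_iff, mem_insert_iff, mem_preimage, mem_compl_iff,
    mem_singleton_iff]
  tauto

lemma mem_branchUnion_or_compl (v : V) (S : Set V) (x : V) :
    x ∈ hT.branchUnion v S ∨ x ∈ hT.branchUnion v Sᶜ := by
  simp only [branchUnion, mem_insert_iff, mem_preimage, mem_compl_iff]
  tauto

lemma adj_mem_branchUnion_or_compl (v : V) (S : Set V) (hab : T.Adj a b) :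
    (a ∈ hT.branchUnion v S ∧ b ∈ hT.branchUnion v S) ∨
      (a ∈ hT.branchUnion v Sᶜ ∧ b ∈ hT.branchUnion v Sᶜ) := by
  have hv : ∀ S, v ∈ hT.branchUnion v S := fun _ => mem_insert _ _
  rcases eq_or_ne a v with rfl | hav
  · have := hT.mem_branchUnion_or_compl a S b; tauto
  rcases eq_or_ne b v with rfl | hbv
  · have := hT.mem_branchUnion_or_compl b S a; tauto
  simp only [branchUnion, mem_insert_iff, mem_preimage, mem_compl_iff,
    hT.firstStep_eq_firstStep_of_adj hav hbv hab]
  tauto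

lemma ncard_edgeSet_add_one [Finite V] (hT : T.IsTree) : T.edgeSet.ncard + 1 = Nat.card V := by
  rw [← Nat.card_coe_set_eq]
  exact (isTree_iff_connected_and_card.mp hT).2

lemma ncard_branchUnion [Finite V] {t : Finset V} (ht : ∀ u ∈ t, T.Adj v u) :
    (hT.branchUnion v t).ncard = ∑ u ∈ t, (hT.branch v u).ncard + 1 := by
  have hv : v ∉ hT.firstStep v ⁻¹' t := fun hv =>
    (ht _ (by simpa [hT.firstStep_self] using hv)).ne rfl
  rw [branchUnion, ncard_insert_of_notMem hv, ncard_preimage_finset]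
  rfl

lemma ncard_branchUnion_compl [Finite V] {t : Finset V} (ht : ∀ u ∈ t, T.Adj v u) :
    (hT.branchUnion v (↑t)ᶜ).ncard + ∑ u ∈ t, (hT.branch v u).ncard = Nat.card V := by
  have hv : v ∈ (hT.firstStep v ⁻¹' t)ᶜ := fun hv =>
    (ht _ (by simpa [hT.firstStep_self] using hv)).ne rfl
  rw [branchUnion, preimage_compl, insert_eq_of_mem hv, add_comm]
  simp only [branch, ← ncard_preimage_finset]
  exact ncard_add_ncard_compl _

lemma branchUnion_neighborSet (v : V) : hT.branchUnion v (T.neighborSet v) = univ := by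
  refine eq_univ_of_forall fun x => ?_
  rcases eq_or_ne x v with rfl | hxv
  · exact mem_insert _ _
  · exact mem_insert_of_mem _ (hT.adj_firstStep hxv)

lemma sum_ncard_branch_add_one [Fintype V] [DecidableRel T.Adj] (v : V) :
    ∑ u ∈ T.neighborFinset v, (hT.branch v u).ncard + 1 = Nat.card V := by
  rw [← hT.ncard_branchUnion (t := T.neighborFinset v) (by simp), coe_neighborFinset,
    branchUnion_neighborSet, ncard_univ]

lemma exists_balanced_branchUnion [Finite V] (hcard : 3 ≤ Nat.card V) :
    ∃ v, ∃ S : Set V, T.edgeSet.ncard + 3 ≤ 3 * (hT.branchUnion v S).ncard ∧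
      T.edgeSet.ncard + 3 ≤ 3 * (hT.branchUnion v Sᶜ).ncard := by
  classical
  have := Fintype.ofFinite V
  obtain ⟨v, hv⟩ := hT.exists_centroid
  have hm := hT.ncard_edgeSet_add_one
  have hN := hT.sum_ncard_branch_add_one v
  obtain ⟨t, hts, hlow, hhigh⟩ := (T.neighborFinset v).exists_subset_sum_between_thirds
    (fun u => (hT.branch v u).ncard) fun u hu => by
      have := hv u (by simpa using hu)
      omega
  have ht : ∀ u ∈ t, T.Adj v u := fun u hu => by simpa using hts hu
  have := hT.ncard_branchUnion ht
  have := hT.ncard_branchUnion_compl ht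
  exact ⟨v, t, by omega, by omega⟩

end SimpleGraph.IsTree

/-- Any tree `T` on `n ≥ 3` vertices splits into two subtrees `T'`,
`T''` meeting in exactly one vertex, partitioning the edges of `T`, each containing at
least a third of the edges of `T`. -/
theorem tree_edge_split :
    ∀ (V : Type) [Fintype V], ∀ T : SimpleGraph V, T.IsTree → 3 ≤ Fintype.card V →
      ∃ T' T'' : T.Subgraph, T'.Connected ∧ T''.Connected ∧
        (T'.verts ∩ T''.verts).ncard = 1 ∧
        T'.edgeSet ∪ T''.edgeSet = T.edgeSet ∧
        Disjoint T'.edgeSet T''.edgeSet ∧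
        (T.edgeSet.ncard : ℝ) / 3 ≤ (T'.edgeSet.ncard : ℝ) ∧
        (T.edgeSet.ncard : ℝ) / 3 ≤ (T''.edgeSet.ncard : ℝ) := by
  intro V _ T hT hcard
  obtain ⟨v, S, hS, hSc⟩ := hT.exists_balanced_branchUnion (by rwa [Nat.card_eq_fintype_card])
  have hconn (U : Set V) : ((⊤ : T.Subgraph).induce (hT.branchUnion v U)).Connected :=
    SimpleGraph.connected_induce_iff.mp (hT.connected_induce_branchUnion v U)
  have hthird (U : Set V) (h : T.edgeSet.ncard + 3 ≤ 3 * (hT.branchUnion v U).ncard) :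
      (T.edgeSet.ncard : ℝ) / 3 ≤
        ((⊤ : T.Subgraph).induce (hT.branchUnion v U)).edgeSet.ncard := by
    have : (hT.branchUnion v U).ncard ≤ _ + 1 :=
      (hconn U).ncard_verts_le_ncard_edgeSet_add_one
    rw [div_le_iff₀ three_pos]
    exact_mod_cast (by omega)
  refine ⟨_, _, hconn S, hconn Sᶜ, ?_, ?_, ?_, hthird S hS, hthird Sᶜ hSc⟩
  · simp [hT.branchUnion_inter_compl]
  · exact SimpleGraph.edgeSet_induce_top_union fun a b hab =>
      hT.adj_mem_branchUnion_or_compl v S hab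
  · exact SimpleGraph.disjoint_edgeSet_induce_top (by simp [hT.branchUnion_inter_compl])
end

section
/- For every positive integer Δ, every ε > 0 and every positive integer k there exists n₀ such that for every n ≥ n₀ and every tree T on n vertices with Δ(T) ≤ Δ rooted at a vertex t₁, there exist pairwise disjoint subsets F₁, …, F_r of V(T) and (not necessarily distinct) vertices v₁, …, v_r of T such that: (1) |F₁ ∪ … ∪ F_r| ≥ (1−ε)n; (2) |F_i| ≤ n^{2/3} for each i; (3) for every i ∈ [r], every x ∈ {t₁} ∪ F₁ ∪ … ∪ F_{i−1} and every y ∈ F_i, the path from x to y in T passes through v_i; (4) for every y ∈ F_i, the distance in T from v_i to y is at least k³. -/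
/-!
Root the tree at `t₁` and call `D(v)` the set of vertices whose path from `t₁` passes through `v`.
Greedily, while more than `m ≈ n^{2/3} / Δ` vertices remain in the current set `R`, pick a
deepest `v` with `|D(v) ∩ R| > m`; its children carry at most `m` vertices of `R` each, so
`m < |D(v) ∩ R| ≤ 1 + Δ m`. The piece is `D(v) ∩ R` minus the ball of radius `k³` around `v`,
which has at most `(Δ + 1)^{k³}` vertices, and `D(v)` is then removed from `R`. Listing the
pieces in reverse order of extraction, everything before a piece lies outside `D(v)`, so its
path to the piece goes through `v`. There are at most `n / (m + 1) = O(n^{1/3})` pieces, so at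
most `m + O(n^{1/3}) (Δ + 1)^{k³} ≤ ε n` vertices are lost.
-/

/-- `v` lies on the (unique) path from `x` to `y` in `T`. -/
def OnPath {V : Type*} (T : SimpleGraph V) (x y v : V) : Prop :=
  ∀ p : T.Walk x y, p.IsPath → v ∈ p.support

open Finset

namespace SimpleGraph

section Paths

variable {V : Type*} {G : SimpleGraph V} {x y v : V}

lemma onPath_start : OnPath G x y x := fun p _ => p.start_mem_support

lemma IsAcyclic.eq_of_isPath (hG : G.IsAcyclic) {p q : G.Walk x y} (hp : p.IsPath)
    (hq : q.IsPath) : p = q :=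
  congrArg Subtype.val ((hG.subsingleton_path x y).elim ⟨p, hp⟩ ⟨q, hq⟩)

lemma IsAcyclic.onPath_iff_mem_support (hG : G.IsAcyclic) {p : G.Walk x y} (hp : p.IsPath) :
    OnPath G x y v ↔ v ∈ p.support :=
  ⟨fun h => h p hp, fun hv q hq => by rwa [hG.eq_of_isPath hq hp]⟩

lemma IsAcyclic.length_eq_dist (hG : G.IsAcyclic) {p : G.Walk x y} (hp : p.IsPath) :
    p.length = G.dist x y := by
  obtain ⟨q, hq, hql⟩ := p.reachable.exists_path_of_dist
  rw [← hql, hG.eq_of_isPath hp hq]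

lemma IsTree.onPath_iff_dist_add_dist_eq (hG : G.IsTree) :
    OnPath G x y v ↔ G.dist x v + G.dist v y = G.dist x y := by
  classical
  constructor
  · intro h
    obtain ⟨p, hp, -⟩ := hG.connected.exists_path_of_dist x y
    have hv := h p hp
    rw [← hG.isAcyclic.length_eq_dist hp, ← p.take_spec hv, Walk.length_append,
      hG.isAcyclic.length_eq_dist (hp.takeUntil hv), hG.isAcyclic.length_eq_dist (hp.dropUntil hv)]
  · intro h
    obtain ⟨p, -, hpl⟩ := hG.connected.exists_path_of_dist x v
    obtain ⟨q, -, hql⟩ := hG.connected.exists_path_of_dist v y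
    have hpq : (p.append q).IsPath :=
      (p.append q).isPath_of_length_eq_dist (by rw [Walk.length_append, hpl, hql, h])
    rw [hG.isAcyclic.onPath_iff_mem_support hpq, Walk.mem_support_append_iff]
    exact Or.inl p.end_mem_support

lemma IsTree.onPath_of_onPath_of_not_onPath (hG : G.IsTree) {t : V} (hy : OnPath G t y v)
    (hx : ¬ OnPath G t x v) : OnPath G x y v := by
  intro q _
  obtain ⟨p, hp, -⟩ := hG.connected.exists_path_of_dist t x
  classical
  have hv := (p.append q).support_bypass_subset_support (hy _ (p.append q).bypass_isPath)
  rw [Walk.mem_support_append_iff, ← hG.isAcyclic.onPath_iff_mem_support hp] at hv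
  exact hv.resolve_left hx

lemma IsTree.exists_adj_onPath_of_onPath (hG : G.IsTree) {t : V} (hy : OnPath G t y v)
    (hne : y ≠ v) : ∃ c, G.Adj v c ∧ G.dist t c = G.dist t v + 1 ∧ OnPath G t y c := by
  obtain ⟨p, hp, hpl⟩ := hG.connected.exists_path_of_dist v y
  cases p with
  | nil => exact absurd rfl hne
  | @cons _ c _ hvc q =>
    have hq : q.length = G.dist c y := hG.isAcyclic.length_eq_dist hp.of_cons
    rw [Walk.length_cons, hq] at hpl
    rw [hG.onPath_iff_dist_add_dist_eq] at hy
    have h1 : G.dist t c ≤ G.dist t v + 1 := by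
      rw [← dist_eq_one_iff_adj.2 hvc]; exact hG.connected.dist_triangle
    have h2 : G.dist t y ≤ G.dist t c + G.dist c y := hG.connected.dist_triangle
    exact ⟨c, hvc, by omega, hG.onPath_iff_dist_add_dist_eq.2 (by omega)⟩

end Paths

section Finite

variable {V : Type*} [Fintype V] {G : SimpleGraph V}

open Classical in
noncomputable def descendants (G : SimpleGraph V) (t v : V) : Finset V := {y | OnPath G t y v}

@[simp]
lemma mem_descendants {t v y : V} : y ∈ G.descendants t v ↔ OnPath G t y v := by
  simp [descendants]

lemma descendants_self (t : V) : G.descendants t t = univ := by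
  ext; simp [onPath_start]

variable [DecidableEq V] [DecidableRel G.Adj]

lemma Connected.card_filter_dist_le_le (hG : G.Connected) {Δ : ℕ} (hdeg : ∀ v, G.degree v ≤ Δ)
    (v : V) (d : ℕ) : #{y | G.dist v y ≤ d} ≤ (Δ + 1) ^ d := by
  induction d with
  | zero =>
    simp only [Nat.le_zero, hG.dist_eq_zero_iff, pow_zero]
    exact card_le_one.2 fun a ha b hb => by simp_all
  | succ d ih =>
    set B := ({y | G.dist v y ≤ d} : Finset V)
    have hsub : ({y | G.dist v y ≤ d + 1} : Finset V) ⊆ B ∪ B.biUnion (G.neighborFinset ·) := by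
      intro y hy
      simp only [mem_filter, mem_univ, true_and] at hy
      rcases hy.lt_or_eq with hlt | heq
      · exact mem_union_left _ (by simpa [B] using Nat.le_of_lt_succ hlt)
      · obtain ⟨p, hp⟩ := hG.exists_walk_length_eq_dist y v
        cases p with
        | nil => simp at heq
        | @cons _ u _ hyu q =>
          rw [dist_comm, heq, Walk.length_cons] at hp
          refine mem_union_right _ (mem_biUnion.2 ⟨u, ?_, by simpa using hyu.symm⟩)
          simpa [B, dist_comm, show q.length = d by omega] using dist_le q
    calc #({y | G.dist v y ≤ d + 1} : Finset V)
        ≤ #B + #B * Δ := (card_le_card hsub).trans <| (card_union_le _ _).trans <|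
          Nat.add_le_add_left (card_biUnion_le_card_mul _ _ _ fun u _ => by simpa using hdeg u) _
      _ = #B * (Δ + 1) := by ring
      _ ≤ (Δ + 1) ^ (d + 1) := by rw [pow_succ]; gcongr

lemma IsTree.exists_lt_card_descendants_inter_le (hG : G.IsTree) {Δ : ℕ}
    (hdeg : ∀ v, G.degree v ≤ Δ) (t : V) {m : ℕ} {R : Finset V} (hR : m < #R) :
    ∃ v, m < #(G.descendants t v ∩ R) ∧ #(G.descendants t v ∩ R) ≤ 1 + Δ * m := by
  set A : Finset V := {v | m < #(G.descendants t v ∩ R)}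
  have htA : t ∈ A := by simpa [A, descendants_self] using hR
  obtain ⟨v, hvA, hmax⟩ := exists_max_image A (G.dist t) ⟨t, htA⟩
  refine ⟨v, by simpa [A] using hvA, ?_⟩
  set C : Finset V := {c ∈ G.neighborFinset v | G.dist t c = G.dist t v + 1}
  have hlight : ∀ c ∈ C, #(G.descendants t c ∩ R) ≤ m := fun c hc => by
    by_contra! hc'
    have := hmax c (by simpa [A] using hc')
    simp only [C, mem_filter] at hc
    omega
  have hsub : G.descendants t v ∩ R ⊆ insert v (C.biUnion fun c => G.descendants t c ∩ R) := by
    intro y hy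
    rw [mem_inter, mem_descendants] at hy
    obtain rfl | hne := eq_or_ne y v
    · exact mem_insert_self _ _
    obtain ⟨c, hvc, hdist, hyc⟩ := hG.exists_adj_onPath_of_onPath hy.1 hne
    exact mem_insert_of_mem (mem_biUnion.2 ⟨c, by simp [C, hvc, hdist], by simp [hyc, hy.2]⟩)
  have hC : #C ≤ Δ := (card_filter_le _ _).trans (by simpa using hdeg v)
  calc #(G.descendants t v ∩ R) ≤ 1 + #C * m :=
        (card_le_card hsub).trans <| (card_insert_le _ _).trans <| by
          rw [add_comm]; exact Nat.add_le_add_left (card_biUnion_le_card_mul _ _ _ hlight) _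
    _ ≤ 1 + Δ * m := by gcongr

lemma Connected.card_le_card_filter_le_dist_add (hG : G.Connected) {Δ : ℕ}
    (hdeg : ∀ v, G.degree v ≤ Δ) (s : Finset V) (v : V) (d : ℕ) :
    #s ≤ #{y ∈ s | d ≤ G.dist v y} + (Δ + 1) ^ d := by
  rw [← card_filter_add_card_filter_not (fun y => d ≤ G.dist v y)]
  gcongr
  refine (card_le_card fun y hy => ?_).trans (hG.card_filter_dist_le_le hdeg v d)
  simp only [mem_filter, not_le, mem_univ, true_and] at hy ⊢
  exact hy.2.le

theorem IsTree.exists_pieces (hG : G.IsTree) {Δ : ℕ} (hdeg : ∀ v, G.degree v ≤ Δ) (t : V)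
    (m d : ℕ) (R : Finset V) :
    ∃ (r : ℕ) (F : Fin r → Finset V) (v : Fin r → V),
      (∀ i, F i ⊆ R ∩ G.descendants t (v i)) ∧
      (∀ i, ∀ y ∈ F i, d ≤ G.dist (v i) y) ∧
      (∀ i, #(F i) ≤ 1 + Δ * m) ∧
      (∀ i j, j < i → Disjoint (F j) (G.descendants t (v i))) ∧
      #R ≤ ∑ i, #(F i) + m + r * (Δ + 1) ^ d ∧
      (m + 1) * r ≤ #R := by
  induction R using Finset.strongInduction with | H R ih =>
  by_cases hR : #R ≤ m
  · exact ⟨0, Fin.elim0, Fin.elim0, nofun, nofun, nofun, nofun, by simpa, by simp⟩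
  obtain ⟨v, hheavy, hlight⟩ := hG.exists_lt_card_descendants_inter_le hdeg t (not_le.1 hR)
  set D := G.descendants t v
  have hP := hG.connected.card_le_card_filter_le_dist_add hdeg (D ∩ R) v d
  set P : Finset V := {y ∈ D ∩ R | d ≤ G.dist v y}
  have hssub : R \ D ⊂ R := by
    obtain ⟨y, hy⟩ := card_pos.1 (hheavy.trans_le' (Nat.zero_le m))
    rw [mem_inter] at hy
    exact (ssubset_iff_of_subset sdiff_subset).2 ⟨y, hy.2, by simp [hy.1]⟩
  obtain ⟨r, F, w, hsub, hfar, hsize, hsep, hcover, hcount⟩ := ih _ hssub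
  have hsplit : #R = #(D ∩ R) + #(R \ D) := by
    rw [inter_comm, card_inter_add_card_sdiff]
  refine ⟨r + 1, Fin.snoc F P, Fin.snoc w v, fun i => ?_, fun i => ?_, fun i => ?_,
    fun i j hji => ?_, ?_, ?_⟩
  · refine Fin.lastCases ?_ (fun i => ?_) i
    · intro y hy; simp_all [P, D]
    · simpa using (hsub i).trans (inter_subset_inter_right sdiff_subset)
  · refine Fin.lastCases ?_ (fun i => ?_) i
    · intro y hy; simp_all [P, D]
    · simpa using hfar i
  · refine Fin.lastCases ?_ (fun i => ?_) i
    · simpa using (card_filter_le _ _).trans hlight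
    · simpa using hsize i
  · refine Fin.lastCases ?_ (fun i => ?_) i hji
    · refine Fin.lastCases (by simp) (fun j _ => ?_) j
      simpa using disjoint_of_subset_left ((hsub j).trans inter_subset_left) sdiff_disjoint
    · refine Fin.lastCases (fun h => absurd h (Fin.castSucc_lt_last i).not_gt) (fun j h => ?_) j
      simpa using hsep i j (Fin.castSucc_lt_castSucc_iff.1 h)
  · rw [Fin.sum_univ_castSucc]
    simp only [Fin.snoc_castSucc, Fin.snoc_last]
    rw [add_mul, one_mul]
    omega
  · rw [mul_add, mul_one]
    omega

end Finite

end SimpleGraph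

lemma exists_threshold_loss_le {Δ : ℕ} (hΔ : 0 < Δ) (C : ℕ) {ε : ℝ} (hε : 0 < ε) :
    ∃ n₀ : ℕ, ∀ n ≥ n₀, ∃ m : ℕ, (1 + Δ * m : ℝ) ≤ (n : ℝ) ^ ((2 : ℝ) / 3) ∧
      ∀ r : ℕ, (m + 1) * r ≤ n → (m + r * C : ℝ) ≤ ε * n := by
  set A : ℝ := 2 / ε + 2 * Δ * C / ε + 1
  refine ⟨⌈A ^ 3⌉₊, fun n hn => ?_⟩
  set a : ℝ := (n : ℝ) ^ ((1 : ℝ) / 3)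
  have ha0 : 0 ≤ a := by positivity
  have rpow_eq (k : ℕ) : (n : ℝ) ^ ((k : ℝ) / 3) = a ^ k := by
    rw [← Real.rpow_natCast, ← Real.rpow_mul n.cast_nonneg]; ring_nf
  have ha3 : a ^ 3 = n := by simpa using (rpow_eq 3).symm
  have hAa : A ≤ a := by
    by_contra! h
    have := pow_lt_pow_left₀ h ha0 three_ne_zero
    rw [ha3] at this
    linarith [Nat.le_ceil (A ^ 3), (Nat.cast_le (α := ℝ)).2 hn]
  have hΔ' : (1 : ℝ) ≤ Δ := by exact_mod_cast hΔ
  have hεa : 2 ≤ ε * a := by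
    have : 2 / ε ≤ a := by linarith [show 0 ≤ 2 * Δ * C / ε by positivity]
    rwa [div_le_iff₀ hε, mul_comm] at this
  have hεC : 2 * Δ * C ≤ ε * (a ^ 2 - 1) := by
    have : 2 * Δ * C / ε ≤ a - 1 := by linarith [show 0 ≤ 2 / ε by positivity]
    rw [div_le_iff₀ hε] at this
    have ha1 : 1 ≤ a := by linarith [show 0 ≤ 2 / ε + 2 * Δ * C / ε by positivity]
    nlinarith
  set m := ⌊(a ^ 2 - 1) / Δ⌋₊
  have hm : Δ * (m : ℝ) ≤ a ^ 2 - 1 := by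
    have := Nat.floor_le (a := (a ^ 2 - 1) / Δ) (div_nonneg (by nlinarith) (by positivity))
    rwa [le_div_iff₀ (by positivity), mul_comm] at this
  have hm' : a ^ 2 - 1 ≤ Δ * ((m : ℝ) + 1) := by
    have := Nat.lt_floor_add_one ((a ^ 2 - 1) / Δ)
    rw [div_lt_iff₀ (by positivity), mul_comm] at this
    exact this.le
  refine ⟨m, by rw [← show ((2 : ℕ) : ℝ) = 2 from rfl, rpow_eq 2]; linarith, fun r hr => ?_⟩
  have hr' : ((m : ℝ) + 1) * r ≤ a ^ 3 := by rw [ha3]; exact_mod_cast hr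
  have hloss_m : 2 * (m : ℝ) ≤ ε * a ^ 3 := by nlinarith
  have hloss_r : 2 * ((r : ℝ) * C) ≤ ε * a ^ 3 := by
    have : Δ * (2 * ((r : ℝ) * C)) ≤ Δ * (ε * a ^ 3) := by
      calc Δ * (2 * ((r : ℝ) * C)) = 2 * Δ * C * r := by ring
        _ ≤ ε * (a ^ 2 - 1) * r := by gcongr
        _ ≤ ε * (Δ * ((m : ℝ) + 1)) * r := by gcongr
        _ = Δ * (ε * (((m : ℝ) + 1) * r)) := by ring
        _ ≤ Δ * (ε * a ^ 3) := by gcongr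
    exact le_of_mul_le_mul_left this (by positivity)
  rw [← ha3]
  linarith

open SimpleGraph

/-- Splitting a bounded-degree tree into pieces `F₁, …, F_r` which are
almost spanning, small, separated from everything earlier by a vertex `v i`, and far
from that vertex. -/
theorem tree_splitting_pieces :
    ∀ (Δ k : ℕ), 0 < Δ → 0 < k → ∀ ε : ℝ, 0 < ε →
      ∃ n₀ : ℕ, ∀ n : ℕ, n₀ ≤ n →
        ∀ (V : Type) [Fintype V], ∀ (T : SimpleGraph V) (t₁ : V),
          T.IsTree → Fintype.card V = n →
          (∀ v : V, ({w : V | T.Adj v w} : Set V).ncard ≤ Δ) →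
          ∃ (r : ℕ) (F : Fin r → Set V) (vtx : Fin r → V),
            ((Set.univ : Set (Fin r)).Pairwise fun i j => Disjoint (F i) (F j)) ∧
            (1 - ε) * (n : ℝ) ≤ (((⋃ i, F i) : Set V).ncard : ℝ) ∧
            (∀ i, ((F i).ncard : ℝ) ≤ (n : ℝ) ^ ((2 : ℝ) / 3)) ∧
            (∀ i : Fin r, ∀ x : V, (x = t₁ ∨ ∃ j, j < i ∧ x ∈ F j) →
              ∀ y ∈ F i, OnPath T x y (vtx i)) ∧
            (∀ i : Fin r, ∀ y ∈ F i, k ^ 3 ≤ T.dist (vtx i) y) := by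
  intro Δ k hΔ _ ε hε
  obtain ⟨n₀, hn₀⟩ := exists_threshold_loss_le hΔ ((Δ + 1) ^ (k ^ 3)) hε
  refine ⟨n₀, fun n hn V _ T t₁ hT hcard hdeg => ?_⟩
  classical
  obtain ⟨m, hsize, hloss⟩ := hn₀ n hn
  have hdeg' (v : V) : T.degree v ≤ Δ := by
    rw [← card_neighborFinset_eq_degree, ← Set.ncard_coe_finset, coe_neighborFinset]
    exact hdeg v
  obtain ⟨r, F, v, hsub, hfar, hcardF, hsep, hcover, hcount⟩ :=
    hT.exists_pieces hdeg' t₁ m (k ^ 3) univ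
  rw [card_univ, hcard] at hcover hcount
  have hdisj : Pairwise fun i j => Disjoint (F i : Set V) (F j) := fun i j hij => by
    simp only [disjoint_coe]
    rcases hij.lt_or_gt with h | h
    · exact ((hsep j i h).mono_right ((hsub j).trans inter_subset_right))
    · exact ((hsep i j h).mono_right ((hsub i).trans inter_subset_right)).symm
  refine ⟨r, fun i => F i, v, fun i _ j _ hij => hdisj hij, ?_, fun i => ?_, ?_, hfar⟩
  · rw [Set.ncard_iUnion_of_finite (fun i => (F i).finite_toSet) hdisj,
      finsum_eq_sum_of_fintype]
    simp only [Set.ncard_coe_finset]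
    have := hloss r hcount
    have : (n : ℝ) ≤ ∑ i, #(F i) + m + r * (Δ + 1) ^ (k ^ 3) := by exact_mod_cast hcover
    push_cast at *
    linarith
  · rw [Set.ncard_coe_finset]
    exact le_trans (by exact_mod_cast hcardF i) hsize
  · rintro i x hx y hy
    have hyv : OnPath T t₁ y (v i) := mem_descendants.1 (mem_inter.1 (hsub i hy)).2
    rcases hx with rfl | ⟨j, hji, hxj⟩
    · exact hyv
    · exact hT.onPath_of_onPath_of_not_onPath hyv fun h =>
        disjoint_left.1 (hsep i j hji) hxj (mem_descendants.2 h)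
end

section
/- Every finite tree T rooted at a vertex t₀ admits a tidy ancestral ordering of its vertices. -/
/-!
Order the vertices depth first, visiting the subtrees below the children of each vertex in
increasing order of size. Let `v` be a vertex of an initial segment `I` with a child outside `I`.
If `I` stops inside the subtree of a child `u` of `v`, the child of `v` outside `I` roots a later,
hence at least as large, subtree, so the subtree of `v` is more than twice as large as that of `u`.
Going down the path to the place where `I` stops, every vertex with a child outside `I` doubles the
size of the subtree, so there are at most `log₂ |T|` of them.
-/

namespace List

variable {α : Type*}

section Frontier

variable (C : α → α → Prop) [DecidableRel C]

def frontierCount (P S : List α) : ℕ := P.countP fun x => ∃ y ∈ S, C x y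

/-- Splittings `L = P ++ S` stand for the initial segments `P`, and `2 ^ k ≤ |L|` for
`k ≤ log₂ |L|`. -/
def IsTidy (L : List α) : Prop := ∀ P S, L = P ++ S → 2 ^ frontierCount C P S ≤ L.length

variable {C}

theorem frontierCount_append_of_closed {P₁ P₂ S₁ S₂ : List α}
    (hnd : (P₁ ++ P₂ ++ S₁ ++ S₂).Nodup) (h₁ : ∀ x ∈ P₁, ∀ y, C x y → y ∈ P₁)
    (h₂ : ∀ x ∈ P₂, ∀ y, C x y → y ∈ P₂ ++ S₁) :
    frontierCount C (P₁ ++ P₂) (S₁ ++ S₂) = frontierCount C P₂ S₁ := by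
  simp only [nodup_append, mem_append] at hnd
  rw [frontierCount, countP_append, countP_eq_zero.2, zero_add, frontierCount]
  · refine countP_congr fun x hx => ?_
    simp only [decide_eq_true_eq, mem_append]
    grind
  · simp only [decide_eq_true_eq, mem_append]
    grind

theorem flatten_eq_append_cases {B : List (List α)} {P S : List α} (h : B.flatten = P ++ S) :
    S = [] ∨ ∃ B₁ p s B₂, B = B₁ ++ (p ++ s) :: B₂ ∧ P = B₁.flatten ++ p ∧ S = s ++ B₂.flatten := by
  rcases flatten_eq_append_iff.1 h with
    ⟨B₁, _ | ⟨b, B₂⟩, rfl, rfl, rfl⟩ | ⟨B₁, p, c, s, B₂, rfl, rfl, rfl⟩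
  · simp
  · exact .inr ⟨B₁, [], b, B₂, by simp⟩
  · exact .inr ⟨B₁, p, c :: s, B₂, by simp⟩

theorem frontierCount_cons_flatten {v : α} {B₁ B₂ : List (List α)} {p s : List α}
    (hnd : (v :: (B₁ ++ (p ++ s) :: B₂).flatten).Nodup)
    (hclosed : ∀ b ∈ B₁ ++ (p ++ s) :: B₂, ∀ x ∈ b, ∀ y, C x y → y ∈ b) :
    frontierCount C (v :: (B₁.flatten ++ p)) (s ++ B₂.flatten) =
      frontierCount C p s + if ∃ y ∈ s ++ B₂.flatten, C v y then 1 else 0 := by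
  have hnd' : (B₁.flatten ++ p ++ s ++ B₂.flatten).Nodup := by
    simpa using (nodup_cons.1 hnd).2
  have hB₁ : ∀ x ∈ B₁.flatten, ∀ y, C x y → y ∈ B₁.flatten := fun x hx y hxy => by
    obtain ⟨b, hb, hxb⟩ := mem_flatten.1 hx
    exact mem_flatten.2 ⟨b, hb, hclosed b (by simp [hb]) x hxb y hxy⟩
  rw [frontierCount, countP_cons, ← frontierCount,
    frontierCount_append_of_closed hnd' hB₁ (hclosed _ (by simp) · <| mem_append_left s ·)]
  simp only [decide_eq_true_eq]

theorem IsTidy.cons_flatten {v : α} {B : List (List α)} (hnd : (v :: B.flatten).Nodup)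
    (hsorted : B.Pairwise fun b b' => b.length ≤ b'.length)
    (hclosed : ∀ b ∈ B, ∀ x ∈ b, ∀ y, C x y → y ∈ b)
    (hroot : ∀ y, C v y → ∃ t, y :: t ∈ B) (htidy : ∀ b ∈ B, IsTidy C b) :
    IsTidy C (v :: B.flatten) := by
  rintro (_ | ⟨w, P⟩) S hPS
  · simp [frontierCount]
  obtain ⟨rfl, hflat⟩ := cons_eq_cons.1 hPS
  rcases flatten_eq_append_cases hflat with rfl | ⟨B₁, p, s, B₂, rfl, rfl, rfl⟩
  · simp [frontierCount]
  have hblock : 2 ^ frontierCount C p s ≤ (p ++ s).length := htidy _ (by simp) p s rfl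
  have hlen : (v :: (B₁ ++ (p ++ s) :: B₂).flatten).length =
      1 + B₁.flatten.length + (p ++ s).length + B₂.flatten.length := by
    simp only [length_cons, flatten_append, flatten_cons, length_append]
    ring
  rw [frontierCount_cons_flatten hnd hclosed, hlen]
  split_ifs with hv
  swap
  · rw [add_zero]
    omega
  obtain ⟨y, hyS, hvy⟩ := hv
  obtain ⟨t, ht⟩ := hroot y hvy
  have hdisj : Disjoint (B₁.flatten ++ p) (s ++ B₂.flatten) :=
    disjoint_of_nodup_append (by simpa using (nodup_cons.1 hnd).2)
  rw [pow_succ]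
  rcases p with _ | ⟨z, p⟩
  · have : 0 < (s ++ B₂.flatten).length := length_pos_of_mem hyS
    simp [frontierCount] at this ⊢
    omega
  have htB₂ : y :: t ∈ B₂ := by
    simp only [mem_append, mem_cons] at ht
    rcases ht with hB₁ | ht | ht
    · exact absurd hyS (hdisj (mem_append_left _ (mem_flatten.2 ⟨_, hB₁, mem_cons_self⟩)))
    · obtain ⟨rfl, -⟩ := cons_eq_cons.1 ht
      exact absurd hyS (hdisj (by simp))
    · exact ht
  have hle : (z :: p ++ s).length ≤ (y :: t).length :=
    rel_of_pairwise_cons (pairwise_append.1 hsorted).2.1 htB₂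
  have hle' : (y :: t).length ≤ B₂.flatten.length := (sublist_flatten_of_mem htB₂).length_le
  omega

end Frontier

theorem pairwise_flatten_of_closed {C : α → α → Prop} {B : List (List α)}
    (hdisj : B.Pairwise Disjoint) (hclosed : ∀ b ∈ B, ∀ x ∈ b, ∀ y, C x y → y ∈ b)
    (hB : ∀ b ∈ B, b.Pairwise fun x y => ¬ C y x) :
    B.flatten.Pairwise fun x y => ¬ C y x :=
  pairwise_flatten.2 ⟨hB, hdisj.imp_of_mem fun _ hb₂ hd _ hx y hy hyx =>
    hd hx (hclosed _ hb₂ y hy _ hyx)⟩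

theorem Pairwise.rel_of_idxOf_lt [DecidableEq α] {R : α → α → Prop} {L : List α} {x y : α}
    (hL : L.Pairwise R) (hy : y ∈ L) (h : L.idxOf x < L.idxOf y) : R x y := by
  have hx : x ∈ L := idxOf_lt_length_iff.1 (h.trans (idxOf_lt_length_iff.2 hy))
  simpa using pairwise_iff_getElem.1 hL _ _ (idxOf_lt_length_iff.2 hx) (idxOf_lt_length_iff.2 hy) h

theorem Nodup.mem_drop_iff_le_idxOf [DecidableEq α] {L : List α} {x : α} (hL : L.Nodup)
    (hx : x ∈ L) (j : ℕ) : x ∈ L.drop j ↔ j ≤ L.idxOf x := by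
  rw [← not_lt, ← mem_take_iff_idxOf_lt hx]
  refine ⟨fun hd ht => disjoint_take_drop hL le_rfl ht hd, fun ht => ?_⟩
  rw [← take_append_drop j L] at hx
  exact (mem_append.1 hx).resolve_left ht

theorem Nodup.ncard_setOf_mem_and {L : List α} (hL : L.Nodup) (p : α → Prop) [DecidablePred p] :
    {x | x ∈ L ∧ p x}.ncard = L.countP p := by
  classical
  have : {x | x ∈ L ∧ p x} = ↑(L.filter p).toFinset := by ext; simp
  rw [this, Set.ncard_coe_finset, toFinset_card_of_nodup (hL.filter _), countP_eq_length_filter]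

end List

namespace SimpleGraph

variable {V : Type*} {G : SimpleGraph V} {r u v x y : V}

def IsChild (G : SimpleGraph V) (r x y : V) : Prop := G.Adj x y ∧ G.dist r x < G.dist r y

/-- `v` lies on a shortest path from `r` to `x`; in a tree rooted at `r`, this says that `x` is a
descendant of `v`. -/
def IsDescendant (G : SimpleGraph V) (r v x : V) : Prop := G.dist r v + G.dist v x = G.dist r x

theorem Connected.dist_lt_card [Fintype V] (hG : G.Connected) (u v : V) :
    G.dist u v < Fintype.card V := by
  obtain ⟨p, hp, hlen⟩ := hG.exists_path_of_dist u v
  exact hlen ▸ hp.length_lt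

theorem IsChild.dist_eq (h : G.IsChild r x y) : G.dist r y = G.dist r x + 1 := by
  have := h.1.diff_dist_adj (u := r)
  have := h.2
  omega

theorem isDescendant_self : G.IsDescendant r v v := by
  simp [IsDescendant]

theorem isDescendant_root : G.IsDescendant r r x := by
  simp [IsDescendant]

theorem IsChild.isDescendant (h : G.IsChild r x y) : G.IsDescendant r x y := by
  rw [IsDescendant, dist_eq_one_iff_adj.2 h.1, h.dist_eq]

theorem IsDescendant.trans (hG : G.Connected) (h₁ : G.IsDescendant r u v)
    (h₂ : G.IsDescendant r v x) : G.IsDescendant r u x := by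
  have := hG.dist_triangle (u := r) (v := u) (w := x)
  have := hG.dist_triangle (u := u) (v := v) (w := x)
  unfold IsDescendant at *
  omega

theorem IsDescendant.exists_isChild (hG : G.Connected) (h : G.IsDescendant r v x) (hne : x ≠ v) :
    ∃ u, G.IsChild r v u ∧ G.IsDescendant r u x := by
  obtain ⟨w, hw⟩ := hG.exists_walk_length_eq_dist v x
  cases w with
  | nil => exact absurd rfl hne
  | @cons _ u _ hadj w =>
    have hux := dist_le w
    have hru := hadj.diff_dist_adj (u := r)
    have hrx := hG.dist_triangle (u := r) (v := u) (w := x)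
    unfold IsDescendant at h
    simp only [Walk.length_cons] at hw
    exact ⟨u, ⟨hadj, by omega⟩, by unfold IsDescendant; omega⟩

theorem isDescendant_iff_eq_or_exists_isChild (hG : G.Connected) :
    G.IsDescendant r v x ↔ x = v ∨ ∃ u, G.IsChild r v u ∧ G.IsDescendant r u x := by
  refine ⟨fun h => or_iff_not_imp_left.2 (h.exists_isChild hG), ?_⟩
  rintro (rfl | ⟨u, hu, hux⟩)
  exacts [isDescendant_self, hu.isDescendant.trans hG hux]

theorem IsTree.getVert_eq_of_isDescendant (hG : G.IsTree) (h : G.IsDescendant r u x)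
    (p : G.Path r x) : p.1.getVert (G.dist r u) = u := by
  obtain ⟨w₁, hw₁⟩ := (hG.connected r u).exists_walk_length_eq_dist
  obtain ⟨w₂, hw₂⟩ := (hG.connected u x).exists_walk_length_eq_dist
  have hpath : (w₁.append w₂).IsPath :=
    Walk.isPath_of_length_eq_dist _ (by rw [Walk.length_append, hw₁, hw₂, h])
  rw [(hG.isAcyclic.subsingleton_path r x).elim p ⟨_, hpath⟩, Walk.getVert_append, ← hw₁]
  simp

theorem IsTree.eq_of_isDescendant (hG : G.IsTree) (hu : G.IsDescendant r u x)
    (hv : G.IsDescendant r v x) (h : G.dist r u = G.dist r v) : u = v := by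
  obtain ⟨p, hp, -⟩ := hG.connected.exists_path_of_dist r x
  rw [← hG.getVert_eq_of_isDescendant hu ⟨p, hp⟩, ← hG.getVert_eq_of_isDescendant hv ⟨p, hp⟩, h]

open Classical in
structure IsTidySubtreeOrder (G : SimpleGraph V) (r v : V) (L : List V) : Prop where
  nodup : L.Nodup
  mem_iff : ∀ x, x ∈ L ↔ G.IsDescendant r v x
  head : ∃ t, L = v :: t
  ancestral : L.Pairwise fun x y => ¬ G.IsChild r y x
  tidy : L.IsTidy (G.IsChild r)

theorem IsTidySubtreeOrder.mem_of_isChild {L : List V} (hL : G.IsTidySubtreeOrder r v L)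
    (hG : G.Connected) (hx : x ∈ L) (hxy : G.IsChild r x y) : y ∈ L :=
  (hL.mem_iff y).2 (((hL.mem_iff x).1 hx).trans hG hxy.isDescendant)

section ChildBlocks

variable [Fintype V] {sub : V → List V}

open Classical in
noncomputable def childBlocks (G : SimpleGraph V) (r v : V) (sub : V → List V) :
    List (List V) :=
  ((Finset.univ.filter (G.IsChild r v)).toList.map sub).mergeSort
    fun b b' => b.length ≤ b'.length

theorem mem_childBlocks {b : List V} :
    b ∈ G.childBlocks r v sub ↔ ∃ u, G.IsChild r v u ∧ sub u = b := by
  simp [childBlocks, List.mem_mergeSort]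

theorem pairwise_length_childBlocks :
    (G.childBlocks r v sub).Pairwise fun b b' => b.length ≤ b'.length := by
  unfold childBlocks
  simpa using List.pairwise_mergeSort (le := fun b b' : List V => b.length ≤ b'.length)
    (fun _ _ _ => by simpa using Nat.le_trans) (fun _ _ => by simpa using Nat.le_total _ _) _

theorem mem_flatten_childBlocks
    (hsub : ∀ u, G.IsChild r v u → G.IsTidySubtreeOrder r u (sub u)) :
    x ∈ (G.childBlocks r v sub).flatten ↔ ∃ u, G.IsChild r v u ∧ G.IsDescendant r u x := by
  simp only [List.mem_flatten, mem_childBlocks]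
  constructor
  · rintro ⟨_, ⟨u, hu, rfl⟩, hx⟩
    exact ⟨u, hu, ((hsub u hu).mem_iff x).1 hx⟩
  · rintro ⟨u, hu, hx⟩
    exact ⟨_, ⟨u, hu, rfl⟩, ((hsub u hu).mem_iff x).2 hx⟩

theorem isTidySubtreeOrder_of_mem_childBlocks
    (hsub : ∀ u, G.IsChild r v u → G.IsTidySubtreeOrder r u (sub u)) {b : List V}
    (hb : b ∈ G.childBlocks r v sub) : ∃ u, G.IsTidySubtreeOrder r u b := by
  obtain ⟨u, hu, rfl⟩ := mem_childBlocks.1 hb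
  exact ⟨u, hsub u hu⟩

theorem pairwise_disjoint_childBlocks (hG : G.IsTree)
    (hsub : ∀ u, G.IsChild r v u → G.IsTidySubtreeOrder r u (sub u)) :
    (G.childBlocks r v sub).Pairwise List.Disjoint := by
  classical
  refine ((List.mergeSort_perm _ _).pairwise_iff fun h => h.symm).2 ?_
  refine List.pairwise_map.2 ((Finset.nodup_toList _).imp_of_mem fun hu hu' hne x hx hx' => ?_)
  simp only [Finset.mem_toList, Finset.mem_filter] at hu hu'
  refine hne (hG.eq_of_isDescendant (((hsub _ hu.2).mem_iff x).1 hx)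
    (((hsub _ hu'.2).mem_iff x).1 hx') ?_)
  rw [hu.2.dist_eq, hu'.2.dist_eq]

theorem isTidySubtreeOrder_cons_flatten_childBlocks (hG : G.IsTree)
    (hsub : ∀ u, G.IsChild r v u → G.IsTidySubtreeOrder r u (sub u)) :
    G.IsTidySubtreeOrder r v (v :: (G.childBlocks r v sub).flatten) := by
  classical
  set B := G.childBlocks r v sub
  have hblock (b) (hb : b ∈ B) := isTidySubtreeOrder_of_mem_childBlocks hsub hb
  have hdist : ∀ x ∈ B.flatten, G.dist r v < G.dist r x := by
    intro x hx
    obtain ⟨u, hu, hux⟩ := (mem_flatten_childBlocks hsub).1 hx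
    have := hu.dist_eq
    unfold IsDescendant at hux
    omega
  have hclosed : ∀ b ∈ B, ∀ x ∈ b, ∀ y, G.IsChild r x y → y ∈ b := by
    intro b hb x hx y hxy
    obtain ⟨u, hb⟩ := hblock b hb
    exact hb.mem_of_isChild hG.connected hx hxy
  have hdisj := pairwise_disjoint_childBlocks hG hsub
  have hnd : (v :: B.flatten).Nodup := by
    refine List.nodup_cons.2 ⟨fun hv => (hdist v hv).false, List.nodup_flatten.2 ⟨?_, hdisj⟩⟩
    intro b hb
    obtain ⟨u, hb⟩ := hblock b hb
    exact hb.nodup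
  refine ⟨hnd, fun x => ?_, ⟨_, rfl⟩, ?_, ?_⟩
  · rw [List.mem_cons, mem_flatten_childBlocks hsub,
      isDescendant_iff_eq_or_exists_isChild hG.connected]
  · refine List.pairwise_cons.2 ⟨fun x hx hxv => ?_, ?_⟩
    · have := hxv.dist_eq
      have := hdist x hx
      omega
    refine List.pairwise_flatten_of_closed hdisj hclosed fun b hb => ?_
    obtain ⟨u, hb⟩ := hblock b hb
    exact hb.ancestral
  · refine List.IsTidy.cons_flatten hnd pairwise_length_childBlocks hclosed (fun y hy => ?_)
      fun b hb => ?_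
    · obtain ⟨t, ht⟩ := (hsub y hy).head
      exact ⟨t, ht ▸ mem_childBlocks.2 ⟨y, hy, rfl⟩⟩
    · obtain ⟨u, hb⟩ := hblock b hb
      exact hb.tidy

end ChildBlocks

theorem IsTree.exists_isTidySubtreeOrder [Fintype V] (hG : G.IsTree) (r v : V) :
    ∃ L, G.IsTidySubtreeOrder r v L := by
  have ih (u : V) (hu : G.IsChild r v u) : ∃ L, G.IsTidySubtreeOrder r u L :=
    hG.exists_isTidySubtreeOrder r u
  choose! sub hsub using ih
  exact ⟨_, isTidySubtreeOrder_cons_flatten_childBlocks hG hsub⟩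
termination_by Fintype.card V - G.dist r v
decreasing_by
  have := hu.dist_eq
  have := hG.connected.dist_lt_card r u
  omega

end SimpleGraph

/-- Every finite rooted tree admits a tidy ancestral ordering: the root
comes first, every vertex appears after its parent (its unique neighbour closer to the
root), and every initial segment `I` contains at most `log₂ |T|` vertices having a child
outside `I`. -/
theorem tidy_ancestral_ordering :
    ∀ (V : Type) [Fintype V], ∀ (T : SimpleGraph V) (t₀ : V), T.IsTree →
      ∃ σ : V ≃ Fin (Fintype.card V),
        (σ t₀ : ℕ) = 0 ∧
        (∀ x y : V, T.Adj x y → T.dist t₀ y < T.dist t₀ x → (σ y : ℕ) < (σ x : ℕ)) ∧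
        ∀ j : ℕ,
          ((({x : V | (σ x : ℕ) < j ∧
              ∃ y : V, T.Adj x y ∧ T.dist t₀ x < T.dist t₀ y ∧ j ≤ (σ y : ℕ)} :
              Set V).ncard : ℝ))
            ≤ Real.logb 2 (Fintype.card V) := by
  intro V _ T t₀ hT
  classical
  obtain ⟨L, hL⟩ := hT.exists_isTidySubtreeOrder t₀ t₀
  have hall (x : V) : x ∈ L := (hL.mem_iff x).2 SimpleGraph.isDescendant_root
  let e := hL.nodup.getEquivOfForallMemList L hall
  have hlen : L.length = Fintype.card V := by simpa using Fintype.card_congr e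
  set σ := e.symm.trans (finCongr hlen)
  have hσ (x : V) : (σ x : ℕ) = L.idxOf x := rfl
  refine ⟨σ, ?_, fun x y hxy hlt => ?_, fun j => ?_⟩
  · obtain ⟨t, rfl⟩ := hL.head
    rw [hσ, List.idxOf_cons_self]
  · rw [hσ, hσ]
    refine lt_of_le_of_ne (not_lt.1 fun h => ?_) fun h => hxy.ne ?_
    · exact hL.ancestral.rel_of_idxOf_lt (hall y) h ⟨hxy.symm, hlt⟩
    · exact ((List.idxOf_inj (hall y)).1 h).symm
  · have hset : {x | (σ x : ℕ) < j ∧ ∃ y, T.Adj x y ∧ T.dist t₀ x < T.dist t₀ y ∧ j ≤ (σ y : ℕ)} =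
        {x | x ∈ L.take j ∧ ∃ y ∈ L.drop j, T.IsChild t₀ x y} := by
      ext x
      simp only [hσ, Set.mem_ofPred_eq, List.mem_take_iff_idxOf_lt (hall _),
        hL.nodup.mem_drop_iff_le_idxOf (hall _), SimpleGraph.IsChild]
      grind
    have hpos : (0 : ℝ) < Fintype.card V := by exact_mod_cast Fintype.card_pos_iff.2 ⟨t₀⟩
    rw [hset, (hL.nodup.sublist (List.take_sublist j L)).ncard_setOf_mem_and,
      Real.le_logb_iff_rpow_le one_lt_two hpos, Real.rpow_natCast]
    exact_mod_cast hlen ▸ hL.tidy _ _ (List.take_append_drop j L).symm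
end

section
/- Let T be a tree on n vertices, let Δ ≥ 2 be an integer, and let T_c be the core tree of T with parameter Δ. Then: (i) T_c is a tree containing at least one vertex; (ii) w_e(x) ≥ n/Δ for every edge e = xy of T_c; (iii) Δ(T_c) ≤ Δ; (iv) every component subtree T' of T − T_c satisfies |T'| ≤ n/Δ. -/
/-- The weight `w_e(x)` of the edge `e = xy` from `x`: the number of vertices `z ≠ x`
whose path from `x` starts along `e`, i.e. passes through `y`. -/
noncomputable def edgeWeight {V : Type*} (T : SimpleGraph V) (x y : V) : ℕ :=
  ({z : V | z ≠ x ∧ OnPath T x z y} : Set V).ncard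

/-- The set of `Δ`-core vertices of `T`. -/
def coreSet {V : Type*} [Fintype V] (T : SimpleGraph V) (Δ : ℕ) : Set V :=
  {x : V | ∀ y : V, T.Adj x y →
    (edgeWeight T x y : ℝ) ≤ (1 - 1 / (Δ : ℝ)) * (Fintype.card V : ℝ)}

namespace SimpleGraph

variable {V : Type*} {T : SimpleGraph V} {x y z u v w : V}

-- `edgeWeight T x y = (T.branch x y).ncard` holds by `rfl`.
def branch (T : SimpleGraph V) (x y : V) : Set V := {z | z ≠ x ∧ OnPath T x z y}

def IsPathConvex (T : SimpleGraph V) (C : Set V) : Prop :=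
  ∀ a ∈ C, ∀ b ∈ C, ∀ w, OnPath T a b w → w ∈ C

lemma onPath_comm : OnPath T x y w ↔ OnPath T y x w :=
  ⟨fun h p hp => by simpa using h p.reverse hp.reverse,
    fun h p hp => by simpa using h p.reverse hp.reverse⟩

lemma onPath_end (x y : V) : OnPath T x y y := fun p _ => p.end_mem_support

lemma eq_of_onPath_self (h : OnPath T u u v) : v = u := by
  simpa using h Walk.nil Walk.IsPath.nil

lemma IsAcyclic.onPath_iff (hT : T.IsAcyclic) {p : T.Walk x y} (hp : p.IsPath) :
    OnPath T x y w ↔ w ∈ p.support :=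
  ⟨fun h => h p hp, fun h q hq => by
    rwa [Subtype.mk.inj (hT.subsingleton_path x y |>.elim ⟨q, hq⟩ ⟨p, hp⟩)]⟩

lemma mem_branch_iff (h : T.Adj x y) : z ∈ T.branch x y ↔ OnPath T x z y := by
  refine ⟨And.right, fun hz => ⟨?_, hz⟩⟩
  rintro rfl
  exact h.ne (eq_of_onPath_self hz).symm

namespace IsTree

variable (hT : T.IsTree)
include hT

lemma exists_isPath (x y : V) : ∃ p : T.Walk x y, p.IsPath :=
  hT.connected.preconnected.exists_isPath x y

lemma onPath_or (h : OnPath T x y w) (u : V) : OnPath T x u w ∨ OnPath T u y w := by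
  classical
  obtain ⟨p, hp⟩ := hT.exists_isPath x u
  obtain ⟨q, hq⟩ := hT.exists_isPath u y
  rw [hT.isAcyclic.onPath_iff hp, hT.isAcyclic.onPath_iff hq, ← Walk.mem_support_append_iff]
  exact Walk.support_bypass_subset_support _ (h _ (p.append q).bypass_isPath)

lemma onPath_iff_not_onPath (h : T.Adj x y) : OnPath T x z y ↔ ¬ OnPath T y z x := by
  obtain ⟨p, hp⟩ := hT.exists_isPath z x
  obtain ⟨q, hq⟩ := hT.exists_isPath z y
  rw [onPath_comm, @onPath_comm _ _ y, hT.isAcyclic.onPath_iff hp, hT.isAcyclic.onPath_iff hq]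
  exact ⟨hT.isAcyclic.ne_mem_support_of_support_of_adj_of_isPath hp hq h,
    hT.isAcyclic.mem_support_of_ne_mem_support_of_adj_of_isPath hp hq h⟩

lemma branch_eq_compl (h : T.Adj x y) : T.branch x y = (T.branch y x)ᶜ := by
  ext z
  rw [Set.mem_compl_iff, mem_branch_iff h, mem_branch_iff h.symm,
    hT.onPath_iff_not_onPath h]

lemma edgeWeight_add_edgeWeight [Fintype V] (h : T.Adj x y) :
    edgeWeight T x y + edgeWeight T y x = Fintype.card V := by
  change (T.branch x y).ncard + (T.branch y x).ncard = _
  rw [hT.branch_eq_compl h, add_comm, Set.ncard_add_ncard_compl, Nat.card_eq_fintype_card]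

lemma disjoint_branch (h₁ : T.Adj x y₁) (h₂ : T.Adj x y₂) (hne : y₁ ≠ y₂) :
    Disjoint (T.branch x y₁) (T.branch x y₂) := by
  refine Set.disjoint_left.2 fun z hz₁ hz₂ => hne ?_
  obtain ⟨p, hp⟩ := hT.exists_isPath x z
  exact (hT.isAcyclic.eq_snd_of_adj_start hp h₁ (hz₁.2 p hp)).trans
    (hT.isAcyclic.eq_snd_of_adj_start hp h₂ (hz₂.2 p hp)).symm

lemma branch_subset_branch (hxy : T.Adj x y) (hyz : T.Adj y z) (hzx : z ≠ x) :
    T.branch y z ⊆ T.branch x y := by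
  intro w hw
  rw [mem_branch_iff hyz] at hw
  rw [mem_branch_iff hxy, hT.onPath_iff_not_onPath hxy]
  intro hx
  obtain ⟨p, hp⟩ := hT.exists_isPath y w
  exact hzx ((hT.isAcyclic.eq_snd_of_adj_start hp hyz (hw p hp)).trans
    (hT.isAcyclic.eq_snd_of_adj_start hp hxy.symm (hx p hp)).symm)

lemma edgeWeight_lt_edgeWeight [Finite V] (hxy : T.Adj x y) (hyz : T.Adj y z) (hzx : z ≠ x) :
    edgeWeight T y z < edgeWeight T x y :=
  Set.ncard_lt_ncard ⟨hT.branch_subset_branch hxy hyz hzx, fun hsub =>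
    (hsub ((mem_branch_iff hxy).2 (onPath_end x y))).1 rfl⟩ (Set.toFinite _)

lemma exists_adj_branch_subset {p : T.Walk u x} (hp : p.IsPath) (hnil : ¬ p.Nil) :
    ∃ c, T.Adj c x ∧ T.branch c x ⊆ T.branch u p.snd := by
  induction p with
  | nil => exact absurd Walk.nil_nil hnil
  | @cons u v x h q ih =>
    rw [Walk.cons_isPath_iff] at hp
    rcases q with _ | ⟨h', q⟩
    · exact ⟨u, h, by simp⟩
    · obtain ⟨c, hc, hsub⟩ := ih hp.1 Walk.not_nil_cons
      refine ⟨c, hc, hsub.trans ?_⟩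
      simpa using hT.branch_subset_branch h h' fun hu =>
        hp.2 (List.mem_cons_of_mem _ (hu ▸ q.start_mem_support))

end IsTree

section Core

variable [Fintype V] {Δ : ℕ}

lemma IsTree.mem_coreSet_iff (hT : T.IsTree) :
    x ∈ coreSet T Δ ↔ ∀ y, T.Adj x y → (Fintype.card V : ℝ) / Δ ≤ edgeWeight T y x := by
  simp only [coreSet, Set.mem_ofPred_eq]
  refine forall₂_congr fun y hxy => ?_
  have hsum : (edgeWeight T x y : ℝ) + edgeWeight T y x = Fintype.card V := by
    exact_mod_cast hT.edgeWeight_add_edgeWeight hxy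
  have hsplit : (1 - 1 / (Δ : ℝ)) * Fintype.card V = Fintype.card V - Fintype.card V / Δ := by
    ring
  constructor <;> intro h <;> linarith

lemma IsTree.isPathConvex_coreSet (hT : T.IsTree) : T.IsPathConvex (coreSet T Δ) := by
  intro x hx y hy v hv
  rw [hT.mem_coreSet_iff]
  intro u hvu
  have of_core : ∀ a ∈ coreSet T Δ, OnPath T u a v →
      (Fintype.card V : ℝ) / Δ ≤ edgeWeight T u v := by
    intro a ha hav
    obtain ⟨p, hp⟩ := hT.exists_isPath u a
    have hau : a ≠ u := ((mem_branch_iff hvu.symm).2 hav).1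
    obtain ⟨c, hca, hsub⟩ := hT.exists_adj_branch_subset hp fun hn => hau hn.eq.symm
    rw [← hT.isAcyclic.eq_snd_of_adj_start hp hvu.symm (hav p hp)] at hsub
    exact (hT.mem_coreSet_iff.1 ha c hca.symm).trans
      (Nat.cast_le.2 (Set.ncard_le_ncard hsub))
  exact (hT.onPath_or hv u).elim (of_core x hx ∘ onPath_comm.1) (of_core y hy)

lemma IsTree.ncard_adj_coreSet_lt (hT : T.IsTree) (hΔ : 0 < Δ) (x : V) :
    {y ∈ coreSet T Δ | T.Adj x y}.ncard < Δ := by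
  classical
  set S := Finset.univ.filter fun y => y ∈ coreSet T Δ ∧ T.Adj x y
  have hS : {y ∈ coreSet T Δ | T.Adj x y} = ↑S := by ext; simp [S]
  have hdisj : (↑S : Set V).PairwiseDisjoint (T.branch x) := fun y₁ h₁ y₂ h₂ hne =>
    hT.disjoint_branch (by simp_all [S]) (by simp_all [S]) hne
  have hsum : ∑ y ∈ S, edgeWeight T x y < Fintype.card V := by
    change ∑ y ∈ S, (T.branch x y).ncard < _
    rw [← finsum_mem_coe_finset, ← S.finite_toSet.ncard_biUnion (fun _ _ => Set.toFinite _) hdisj,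
      ← Nat.card_eq_fintype_card]
    refine Set.ncard_lt_card fun huniv => ?_
    obtain ⟨y, -, hy⟩ := Set.mem_iUnion₂.1 (huniv ▸ Set.mem_univ x)
    exact hy.1 rfl
  have hlow : ∀ y ∈ S, (Fintype.card V : ℝ) / Δ ≤ edgeWeight T x y := fun y hy => by
    simp only [S, Finset.mem_filter] at hy
    exact hT.mem_coreSet_iff.1 hy.2.1 x hy.2.2.symm
  have hn : (0 : ℝ) < Fintype.card V / Δ := by
    have : Nonempty V := ⟨x⟩
    positivity
  rw [hS, Set.ncard_coe_finset, ← Nat.cast_lt (α := ℝ)]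
  refine lt_of_mul_lt_mul_right ?_ hn.le
  calc (S.card : ℝ) * (Fintype.card V / Δ) ≤ ∑ y ∈ S, (edgeWeight T x y : ℝ) := by
        simpa using Finset.card_nsmul_le_sum S _ _ hlow
    _ < Fintype.card V := by exact_mod_cast hsum
    _ = Δ * (Fintype.card V / Δ) := by field_simp

lemma IsTree.ncard_lt_of_isPathConvex (hT : T.IsTree) (hΔ : 2 ≤ Δ) {C : Set V}
    (hC : T.IsPathConvex C) (hCcore : C ⊆ (coreSet T Δ)ᶜ) (hne : C.Nonempty) :
    (C.ncard : ℝ) < Fintype.card V / Δ := by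
  have light : ∀ v ∈ C, ∃ u, T.Adj v u ∧ (edgeWeight T u v : ℝ) < Fintype.card V / Δ := by
    intro v hv
    simpa [hT.mem_coreSet_iff] using hCcore hv
  let S := {e : V × V | e.2 ∈ C ∧ T.Adj e.2 e.1 ∧ (edgeWeight T e.1 e.2 : ℝ) < Fintype.card V / Δ}
  have hSne : S.Nonempty := by
    obtain ⟨v, hv⟩ := hne
    obtain ⟨u, hvu, huv⟩ := light v hv
    exact ⟨(u, v), hv, hvu, huv⟩
  obtain ⟨⟨u, v⟩, ⟨hv, hvu, huv⟩, hmax⟩ :=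
    S.exists_max_image (fun e => edgeWeight T e.1 e.2) (Set.toFinite S) hSne
  dsimp only at hv hvu huv hmax
  have hhalf : (Fintype.card V : ℝ) / Δ ≤ Fintype.card V / 2 :=
    div_le_div_of_nonneg_left (by positivity) two_pos (by exact_mod_cast hΔ)
  have hsub : C ⊆ T.branch u v := by
    intro z hz
    by_contra hzb
    rw [hT.branch_eq_compl hvu.symm, Set.notMem_compl_iff, mem_branch_iff hvu] at hzb
    have hu : u ∈ C := hC v hv z hz u hzb
    obtain ⟨t, hut, htu⟩ := light u hu
    have hle : edgeWeight T t u ≤ edgeWeight T u v := hmax (t, u) ⟨hu, hut, htu⟩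
    by_cases htv : t = v
    · subst htv
      have hsum : (edgeWeight T t u : ℝ) + edgeWeight T u t = Fintype.card V := by
        exact_mod_cast hT.edgeWeight_add_edgeWeight hvu
      linarith
    · exact (hT.edgeWeight_lt_edgeWeight hut.symm hvu.symm (Ne.symm htv)).not_ge hle
  calc (C.ncard : ℝ) ≤ edgeWeight T u v := Nat.cast_le.2 (Set.ncard_le_ncard hsub)
    _ < Fintype.card V / Δ := huv

lemma IsTree.coreSet_nonempty (hT : T.IsTree) (hΔ : 2 ≤ Δ) : (coreSet T Δ).Nonempty := by
  by_contra hempty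
  have : Nonempty V := hT.connected.nonempty
  have hlt := hT.ncard_lt_of_isPathConvex hΔ (C := Set.univ) (fun _ _ _ _ _ _ => trivial)
    (by simpa [Set.not_nonempty_iff_eq_empty] using hempty) Set.univ_nonempty
  rw [Set.ncard_univ, Nat.card_eq_fintype_card] at hlt
  have : (Fintype.card V : ℝ) / Δ ≤ Fintype.card V :=
    div_le_self (by positivity) (by exact_mod_cast (by omega : 1 ≤ Δ))
  linarith

end Core

lemma IsTree.isTree_induce_of_isPathConvex (hT : T.IsTree) {C : Set V}
    (hC : T.IsPathConvex C) (hne : C.Nonempty) : (T.induce C).IsTree := by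
  have : Nonempty C := hne.to_subtype
  refine ⟨⟨fun a b => ?_⟩, hT.isAcyclic.induce C⟩
  obtain ⟨p, hp⟩ := hT.exists_isPath a b
  exact ⟨p.induce C fun w hw => hC a a.2 b b.2 w ((hT.isAcyclic.onPath_iff hp).2 hw)⟩

lemma ConnectedComponent.isPathConvex_image_supp {s : Set V} (c : (T.induce s).ConnectedComponent) :
    T.IsPathConvex (Subtype.val '' c.supp) := by
  classical
  rintro _ ⟨a, ha, rfl⟩ _ ⟨b, hb, rfl⟩ w hw
  obtain ⟨p⟩ := ConnectedComponent.exact (ha.trans hb.symm)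
  have hwp : w ∈ (p.map (Embedding.induce s).toHom).support :=
    Walk.support_bypass_subset_support _ (hw _ (Walk.bypass_isPath _))
  rw [Walk.support_map, List.mem_map] at hwp
  obtain ⟨w', hw', rfl⟩ := hwp
  exact ⟨w', (ConnectedComponent.sound ⟨(p.takeUntil w' hw').reverse⟩).trans ha, rfl⟩

end SimpleGraph

/-- Properties of the core tree `T_c` of a tree `T` on `n` vertices
with parameter `Δ ≥ 2`: (i) it is a nonempty tree; (ii) each of its edges has weight at
least `n/Δ` from either endvertex; (iii) it has maximum degree at most `Δ`; (iv) every
component of `T − T_c` has at most `n/Δ` vertices. -/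
theorem core_tree_properties :
    ∀ (V : Type) [Fintype V], ∀ (T : SimpleGraph V) (n Δ : ℕ),
      T.IsTree → Fintype.card V = n → 2 ≤ Δ →
      ((coreSet T Δ).Nonempty ∧ (T.induce (coreSet T Δ)).IsTree) ∧
      (∀ x ∈ coreSet T Δ, ∀ y ∈ coreSet T Δ, T.Adj x y →
        (n : ℝ) / (Δ : ℝ) ≤ (edgeWeight T x y : ℝ)) ∧
      (∀ x ∈ coreSet T Δ, ({y ∈ coreSet T Δ | T.Adj x y} : Set V).ncard ≤ Δ) ∧
      (∀ c : (T.induce (coreSet T Δ)ᶜ).ConnectedComponent,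
        (c.supp.ncard : ℝ) ≤ (n : ℝ) / (Δ : ℝ)) := by
  rintro V _ T n Δ hT rfl hΔ
  have hne := hT.coreSet_nonempty hΔ
  refine ⟨⟨hne, hT.isTree_induce_of_isPathConvex hT.isPathConvex_coreSet hne⟩,
    fun x _ y hy hxy => hT.mem_coreSet_iff.1 hy x hxy.symm,
    fun x _ => (hT.ncard_adj_coreSet_lt (by omega) x).le, fun c => ?_⟩
  rw [← Set.ncard_image_of_injective _ Subtype.val_injective]
  refine (hT.ncard_lt_of_isPathConvex hΔ c.isPathConvex_image_supp ?_
    (c.nonempty_supp.image _)).le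
  rintro _ ⟨z, -, rfl⟩
  exact z.2
end

section
/- Let k be a positive integer, let T be a tree on n vertices rooted at some vertex t₁, and let H ⊆ V(T). Then |𝒫_k(H)| ≤ 3k|H|. -/
open SimpleGraph

/-- `y` is a child of `x` in the tree `T` rooted at `t₁`. -/
def IsChildOf {V : Type*} (T : SimpleGraph V) (t₁ y x : V) : Prop :=
  T.Adj x y ∧ T.dist t₁ x < T.dist t₁ y

/-- `x` has at least two children lying in `A`. -/
def HasTwoChildrenIn {V : Type*} (T : SimpleGraph V) (t₁ : V) (A : Set V) (x : V) : Prop :=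
  ∃ y ∈ A, ∃ z ∈ A, y ≠ z ∧ IsChildOf T t₁ y x ∧ IsChildOf T t₁ z x

/-- `P_x`: the first `k` vertices of the path in `T` from `x` to the root `t₁`. -/
def PathStart {V : Type*} (T : SimpleGraph V) (t₁ : V) (k : ℕ) (x : V) : Set V :=
  {y : V | OnPath T x t₁ y ∧ T.dist x y < k}

/-- The iteration `H¹ ⊆ H² ⊆ …` defining `𝒫ₖ(H)`. -/
def HIter {V : Type*} (T : SimpleGraph V) (t₁ : V) (k : ℕ) (H : Set V) : ℕ → Set V
  | 0 => ⋃ x ∈ H, PathStart T t₁ k x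
  | i + 1 => HIter T t₁ k H i ∪
      ⋃ x ∈ {x : V | x ∈ HIter T t₁ k H i ∧ HasTwoChildrenIn T t₁ (HIter T t₁ k H i) x},
        PathStart T t₁ k x

/-- `𝒫ₖ(H)`: `H` with leading paths included (the eventual value of the iteration). -/
def LeadingPathsClosure {V : Type*} (T : SimpleGraph V) (t₁ : V) (k : ℕ) (H : Set V) : Set V :=
  ⋃ i : ℕ, HIter T t₁ k H i


section AuxiliaryLemmas

variable {V : Type} {T : SimpleGraph V} {t₁ : V}

noncomputable def tpar (T : SimpleGraph V) (hT : T.IsTree) (t₁ : V) : V → V :=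
  fun v => ((hT.existsUnique_path v t₁).choose).getVert 1

lemma tpar_spec (hT : T.IsTree) {x : V} (q : T.Walk x t₁) (hq : q.IsPath) :
    tpar T hT t₁ x = q.getVert 1 := by
  obtain ⟨hp, hu⟩ := (hT.existsUnique_path x t₁).choose_spec
  rw [tpar, hu q hq]

lemma tpar_root (hT : T.IsTree) : tpar T hT t₁ t₁ = t₁ := by
  have h := tpar_spec hT (Walk.nil : T.Walk t₁ t₁) Walk.IsPath.nil
  simpa using h

lemma length_eq_dist (hT : T.IsTree) {a b : V} (q : T.Walk a b) (hq : q.IsPath) :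
    q.length = T.dist a b := by
  obtain ⟨p, hp, hl⟩ := (hT.isConnected.preconnected a b).exists_path_of_dist
  rw [(hT.existsUnique_path a b).unique hq hp, hl]

lemma tpar_adj (hT : T.IsTree) {x : V} (hx : x ≠ t₁) : T.Adj x (tpar T hT t₁ x) := by
  obtain ⟨q, hq, -⟩ := hT.existsUnique_path x t₁
  cases q with
  | nil => exact absurd rfl hx
  | cons h q' =>
    rw [tpar_spec hT _ hq, Walk.getVert_cons_succ, Walk.getVert_zero]
    exact h

lemma dist_tpar (hT : T.IsTree) (x : V) : T.dist x (tpar T hT t₁ x) ≤ 1 := by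
  by_cases hx : x = t₁
  · subst hx; rw [tpar_root hT, dist_self]; omega
  · have h := tpar_adj hT hx
    exact le_trans (dist_le (Walk.cons h Walk.nil)) (by simp)

lemma iterate_mem_support (hT : T.IsTree) {x : V} (q : T.Walk x t₁) (hq : q.IsPath) (j : ℕ) :
    (tpar T hT t₁)^[j] x ∈ q.support := by
  induction q generalizing j with
  | nil => rw [Function.iterate_fixed (tpar_root hT)]; exact Walk.start_mem_support _
  | cons h q' ih =>
    cases j with
    | zero => simp
    | succ j =>
      rw [Function.iterate_succ_apply, tpar_spec hT _ hq, Walk.getVert_cons_succ,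
        Walk.getVert_zero, Walk.support_cons]
      exact List.mem_cons_of_mem _ (ih hq.of_cons j)

lemma support_eq_iterate (hT : T.IsTree) {x y : V} (q : T.Walk x t₁) (hq : q.IsPath)
    (hy : y ∈ q.support) : (tpar T hT t₁)^[T.dist x y] x = y := by
  classical
  induction q with
  | nil =>
    simp only [Walk.support_nil, List.mem_singleton] at hy
    subst hy; rw [dist_self]; rfl
  | @cons a b c h q' ih =>
    rw [Walk.support_cons, List.mem_cons] at hy
    rcases hy with rfl | hy
    · rw [dist_self]; rfl
    · have hq' := hq.of_cons
      have hxq' : a ∉ q'.support := ((Walk.cons_isPath_iff h q').1 hq).2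
      have htu : (q'.takeUntil y hy).IsPath := hq'.takeUntil hy
      have hcons : (Walk.cons h (q'.takeUntil y hy)).IsPath := by
        rw [Walk.cons_isPath_iff]
        exact ⟨htu, fun hc => hxq' (Walk.support_takeUntil_subset _ hy hc)⟩
      have hd1 := length_eq_dist hT _ hcons
      have hd2 := length_eq_dist hT _ htu
      rw [Walk.length_cons] at hd1
      have hdist : T.dist a y = T.dist b y + 1 := by rw [← hd1, ← hd2]
      rw [hdist, Function.iterate_succ_apply, tpar_spec hT _ hq, Walk.getVert_cons_succ,
        Walk.getVert_zero]
      exact ih hq' hy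

lemma dist_iterate_le (hT : T.IsTree) (x : V) (j : ℕ) :
    T.dist x ((tpar T hT t₁)^[j] x) ≤ j := by
  induction j with
  | zero => rw [Function.iterate_zero_apply, dist_self]
  | succ j ih =>
    rw [Function.iterate_succ_apply']
    exact le_trans (hT.isConnected.dist_triangle)
      (add_le_add ih (dist_tpar hT _))

lemma child_tpar (hT : T.IsTree) {x y : V} (h : IsChildOf T t₁ y x) :
    tpar T hT t₁ y = x ∧ y ≠ t₁ := by
  classical
  obtain ⟨hadj, hdist⟩ := h
  have hy : y ≠ t₁ := by rintro rfl; rw [dist_self] at hdist; omega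
  obtain ⟨q, hq, -⟩ := hT.existsUnique_path x t₁
  have hys : y ∉ q.support := by
    intro hmem
    have h1 := length_eq_dist hT _ (hq.takeUntil hmem)
    have h2 := length_eq_dist hT _ (hq.dropUntil hmem)
    have h3 := length_eq_dist hT q hq
    have h4 := congrArg Walk.length (q.take_spec hmem)
    rw [Walk.length_append] at h4
    have hc1 : T.dist t₁ y = T.dist y t₁ := dist_comm
    have hc2 : T.dist t₁ x = T.dist x t₁ := dist_comm
    omega
  have hcons : (Walk.cons hadj.symm q).IsPath := (Walk.cons_isPath_iff _ _).2 ⟨hq, hys⟩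
  refine ⟨?_, hy⟩
  rw [tpar_spec hT _ hcons, Walk.getVert_cons_succ, Walk.getVert_zero]

lemma pathStart_iff (hT : T.IsTree) {k : ℕ} {x y : V} :
    y ∈ PathStart T t₁ k x ↔ ∃ j < k, y = (tpar T hT t₁)^[j] x := by
  constructor
  · rintro ⟨honp, hdist⟩
    obtain ⟨q, hq, -⟩ := hT.existsUnique_path x t₁
    exact ⟨T.dist x y, hdist, (support_eq_iterate hT q hq (honp q hq)).symm⟩
  · rintro ⟨j, hj, rfl⟩
    exact ⟨fun p hp => iterate_mem_support hT p hp j,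
      lt_of_le_of_lt (dist_iterate_le hT x j) hj⟩

lemma pathStart_ncard (hT : T.IsTree) [Fintype V] {k : ℕ} {x : V} :
    (PathStart T t₁ k x).ncard ≤ k := by
  classical
  have hsub : PathStart T t₁ k x ⊆
      ↑((Finset.range k).image fun j => (tpar T hT t₁)^[j] x) := by
    intro y hy
    obtain ⟨j, hj, rfl⟩ := (pathStart_iff hT).1 hy
    simp only [Finset.coe_image, Set.mem_image, Finset.mem_coe, Finset.mem_range]
    exact ⟨j, hj, rfl⟩
  calc (PathStart T t₁ k x).ncard
      ≤ (↑((Finset.range k).image fun j => (tpar T hT t₁)^[j] x) : Set V).ncard :=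
        Set.ncard_le_ncard hsub (Finset.finite_toSet _)
    _ = ((Finset.range k).image fun j => (tpar T hT t₁)^[j] x).card :=
        Set.ncard_coe_finset _
    _ ≤ k := le_trans Finset.card_image_le (by simp)

open Classical in
lemma branch_card_le_leaves_card {V : Type} (par : V → V) (r : V) (S B L : Finset V)
    (hBS : B ⊆ S) (hLS : L ⊆ S)
    (hB : ∀ v ∈ B, ∃ y ∈ S, ∃ z ∈ S, y ≠ z ∧ (par y = v ∧ y ≠ r) ∧ (par z = v ∧ z ≠ r))
    (hL : ∀ v ∈ S, v ∉ L → ∃ y ∈ S, par y = v ∧ y ≠ r)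
    (hBL : ∀ v ∈ B, v ∉ L) : B.card ≤ L.card := by
  set c : V → ℕ := fun v => (S.filter fun y => par y = v ∧ y ≠ r).card with hc
  -- total number of children is at most |S|
  have hsum : ∑ v ∈ S, c v ≤ S.card := by
    set C := S.filter (fun y => y ≠ r ∧ par y ∈ S) with hC
    have hfib : C.card = ∑ v ∈ S, (C.filter fun y => par y = v).card :=
      Finset.card_eq_sum_card_fiberwise (fun y hy => (Finset.mem_filter.1 hy).2.2)
    have heq : ∀ v ∈ S, c v = (C.filter fun y => par y = v).card := by
      intro v hv
      have hset : S.filter (fun y => par y = v ∧ y ≠ r) = C.filter (fun y => par y = v) := by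
        ext y
        simp only [hC, Finset.mem_filter, and_assoc]
        constructor
        · rintro ⟨hyS, hpy, hyr⟩; exact ⟨hyS, hyr, hpy ▸ hv, hpy⟩
        · rintro ⟨hyS, hyr, _, hpy⟩; exact ⟨hyS, hpy, hyr⟩
      exact congrArg Finset.card hset
    rw [Finset.sum_congr rfl heq, ← hfib]
    exact Finset.card_le_card (Finset.filter_subset _ _)
  have hBL' : B ⊆ S \ L := fun v hv => Finset.mem_sdiff.2 ⟨hBS hv, hBL v hv⟩
  have h1 : ∀ v ∈ (S \ L) \ B, 1 ≤ c v := by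
    intro v hv
    rw [Finset.mem_sdiff, Finset.mem_sdiff] at hv
    obtain ⟨⟨hvS, hvL⟩, -⟩ := hv
    obtain ⟨y, hyS, hy⟩ := hL v hvS hvL
    exact Finset.card_pos.2 ⟨y, Finset.mem_filter.2 ⟨hyS, hy⟩⟩
  have h2 : ∀ v ∈ B, 2 ≤ c v := by
    intro v hv
    obtain ⟨y, hyS, z, hzS, hne, hy, hz⟩ := hB v hv
    exact Finset.one_lt_card.2 ⟨y, Finset.mem_filter.2 ⟨hyS, hy⟩,
      z, Finset.mem_filter.2 ⟨hzS, hz⟩, hne⟩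
  have e1 : ((S \ L) \ B).card * 1 ≤ ∑ v ∈ (S \ L) \ B, c v := by
    simpa using Finset.card_nsmul_le_sum _ c 1 h1
  have e2 : B.card * 2 ≤ ∑ v ∈ B, c v := by
    simpa using Finset.card_nsmul_le_sum _ c 2 h2
  have e3 : ∑ v ∈ (S \ L) \ B, c v + ∑ v ∈ B, c v = ∑ v ∈ S \ L, c v :=
    Finset.sum_sdiff hBL'
  have e4 : ∑ v ∈ S \ (S \ L), c v + ∑ v ∈ S \ L, c v = ∑ v ∈ S, c v :=
    Finset.sum_sdiff (Finset.sdiff_subset)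
  have e5 : ((S \ L) \ B).card + B.card = (S \ L).card :=
    Finset.card_sdiff_add_card_eq_card hBL'
  have e6 : (S \ L).card + L.card = S.card :=
    Finset.card_sdiff_add_card_eq_card hLS
  omega

lemma hIter_mono {V : Type*} (T : SimpleGraph V) (t₁ : V) (k : ℕ) (H : Set V) :
    ∀ {i j : ℕ}, i ≤ j → HIter T t₁ k H i ⊆ HIter T t₁ k H j := by
  intro i j hij
  induction hij with
  | refl => exact subset_rfl
  | step _ ih => exact ih.trans Set.subset_union_left

lemma hIter_subset_closure {V : Type*} (T : SimpleGraph V) (t₁ : V) (k : ℕ) (H : Set V)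
    (i : ℕ) : HIter T t₁ k H i ⊆ LeadingPathsClosure T t₁ k H :=
  Set.subset_iUnion _ i

end AuxiliaryLemmas

/-- For any positive integer `k`, any tree `T` on `n` vertices rooted
at `t₁` and any `H ⊆ V(T)`, we have `|𝒫ₖ(H)| ≤ 3k|H|`. -/
theorem leading_paths_size :
    ∀ (V : Type) [Fintype V], ∀ (T : SimpleGraph V) (t₁ : V) (k : ℕ) (H : Set V),
      T.IsTree → 0 < k →
      (LeadingPathsClosure T t₁ k H).ncard ≤ 3 * k * H.ncard := by
  intro V _inst T t₁ k H hT hk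
  classical
  set par : V → V := tpar T hT t₁ with hpar
  set S : Set V := LeadingPathsClosure T t₁ k H with hS
  set G : Set V := H ∪ {x | x ∈ S ∧ HasTwoChildrenIn T t₁ S x} with hG
  -- path starts from good vertices stay inside S
  have hPS : ∀ x ∈ G, PathStart T t₁ k x ⊆ S := by
    rintro x (hx | ⟨hxS, y, hy, z, hz, hne, hcy, hcz⟩)
    · exact (Set.subset_biUnion_of_mem hx).trans (hIter_subset_closure T t₁ k H 0)
    · obtain ⟨ix, hix⟩ := Set.mem_iUnion.1 hxS
      obtain ⟨iy, hiy⟩ := Set.mem_iUnion.1 hy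
      obtain ⟨iz, hiz⟩ := Set.mem_iUnion.1 hz
      set i := max ix (max iy iz) with hi
      have hxi : x ∈ HIter T t₁ k H i := hIter_mono T t₁ k H (le_max_left _ _) hix
      have hyi : y ∈ HIter T t₁ k H i :=
        hIter_mono T t₁ k H (le_trans (le_max_left _ _) (le_max_right _ _)) hiy
      have hzi : z ∈ HIter T t₁ k H i :=
        hIter_mono T t₁ k H (le_trans (le_max_right _ _) (le_max_right _ _)) hiz
      have hsub : PathStart T t₁ k x ⊆ HIter T t₁ k H (i + 1) := by
        intro w hw
        exact Or.inr (Set.mem_biUnion ⟨hxi, y, hyi, z, hzi, hne, hcy, hcz⟩ hw)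
      exact hsub.trans (hIter_subset_closure T t₁ k H (i + 1))
  -- S is covered by the path starts from good vertices
  have hSG : S ⊆ ⋃ x ∈ G, PathStart T t₁ k x := by
    have key : ∀ i, HIter T t₁ k H i ⊆ ⋃ x ∈ G, PathStart T t₁ k x := by
      intro i
      induction i with
      | zero =>
        intro v hv
        obtain ⟨x, hx, hvx⟩ := Set.mem_iUnion₂.1 hv
        exact Set.mem_biUnion (Or.inl hx) hvx
      | succ i ih =>
        rintro v (hv | hv)
        · exact ih hv
        · obtain ⟨x, ⟨hxi, y, hy, z, hz, hne, hcy, hcz⟩, hvx⟩ := Set.mem_iUnion₂.1 hv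
          refine Set.mem_biUnion (Or.inr ⟨hIter_subset_closure T t₁ k H i hxi,
            y, hIter_subset_closure T t₁ k H i hy, z, hIter_subset_closure T t₁ k H i hz,
            hne, hcy, hcz⟩) hvx
    intro v hv
    obtain ⟨i, hvi⟩ := Set.mem_iUnion.1 hv
    exact key i hvi
  -- finset versions
  set SF : Finset V := (Set.toFinite S).toFinset with hSF
  set BF : Finset V := SF.filter (fun v => ∃ y ∈ SF, ∃ z ∈ SF,
      y ≠ z ∧ (par y = v ∧ y ≠ t₁) ∧ (par z = v ∧ z ≠ t₁)) with hBF
  set LF : Finset V := SF.filter (fun v => ∀ y ∈ SF, ¬(par y = v ∧ y ≠ t₁)) with hLF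
  have hcount : BF.card ≤ LF.card := by
    refine branch_card_le_leaves_card par t₁ SF BF LF (Finset.filter_subset _ _)
      (Finset.filter_subset _ _) ?_ ?_ ?_
    · intro v hv; exact (Finset.mem_filter.1 hv).2
    · intro v hvS hvL
      by_contra hcon
      push_neg at hcon
      exact hvL (Finset.mem_filter.2 ⟨hvS, fun y hy h => h.2 (hcon y hy h.1)⟩)
    · intro v hv hvL
      obtain ⟨y, hyS, z, hzS, hne, hy, hz⟩ := (Finset.mem_filter.1 hv).2
      exact (Finset.mem_filter.1 hvL).2 y hyS hy
  -- every leaf is in H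
  have hleaf : ∀ v ∈ LF, v ∈ H := by
    intro v hv
    obtain ⟨hvS, hlf⟩ := Finset.mem_filter.1 hv
    have hvS' : v ∈ S := (Set.Finite.mem_toFinset _).1 hvS
    obtain ⟨x, hxG, hvx⟩ := Set.mem_iUnion₂.1 (hSG hvS')
    obtain ⟨j, hj, hveq⟩ := (pathStart_iff hT).1 hvx
    clear hvx hv hvS
    induction j generalizing v with
    | zero =>
      rw [Function.iterate_zero_apply] at hveq
      subst hveq
      rcases hxG with hx | ⟨hxS, y, hy, z, hz, hne, hcy, hcz⟩
      · exact hx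
      · obtain ⟨hpy, hy1⟩ := child_tpar hT hcy
        exact absurd ⟨hpy, hy1⟩ (hlf y ((Set.Finite.mem_toFinset _).2 hy))
    | succ j ih =>
      by_cases hw : par^[j] x = t₁
      · have hveq' : v = par^[j] x := by
          rw [Function.iterate_succ_apply', hw] at hveq
          rw [hw, hveq]
          exact tpar_root hT
        exact ih v hlf hvS' (Nat.lt_of_succ_lt hj) hveq'
      · exfalso
        have hwPS : par^[j] x ∈ PathStart T t₁ k x :=
          (pathStart_iff hT).2 ⟨j, Nat.lt_of_succ_lt hj, rfl⟩
        have hwS : par^[j] x ∈ S := hPS x hxG hwPS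
        refine hlf _ ((Set.Finite.mem_toFinset _).2 hwS) ⟨?_, hw⟩
        rw [← Function.iterate_succ_apply' par j x]
        exact hveq.symm
  -- branch vertices of G are in BF
  have hGB : ∀ x, x ∈ S → HasTwoChildrenIn T t₁ S x → x ∈ BF := by
    rintro x hxS ⟨y, hy, z, hz, hne, hcy, hcz⟩
    obtain ⟨hpy, hy1⟩ := child_tpar hT hcy
    obtain ⟨hpz, hz1⟩ := child_tpar hT hcz
    exact Finset.mem_filter.2 ⟨(Set.Finite.mem_toFinset _).2 hxS,
      y, (Set.Finite.mem_toFinset _).2 hy, z, (Set.Finite.mem_toFinset _).2 hz,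
      hne, ⟨hpy, hy1⟩, ⟨hpz, hz1⟩⟩
  -- the covering bound
  set HF : Finset V := (Set.toFinite H).toFinset with hHF
  have hSsub : SF ⊆ (HF ∪ BF).biUnion (fun x => (Set.toFinite (PathStart T t₁ k x)).toFinset) := by
    intro v hv
    obtain ⟨x, hxG, hvx⟩ := Set.mem_iUnion₂.1 (hSG ((Set.Finite.mem_toFinset _).1 hv))
    refine Finset.mem_biUnion.2 ⟨x, ?_, (Set.Finite.mem_toFinset _).2 hvx⟩
    rcases hxG with hx | ⟨hxS, h2⟩
    · exact Finset.mem_union_left _ ((Set.Finite.mem_toFinset _).2 hx)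
    · exact Finset.mem_union_right _ (hGB x hxS h2)
  have hcard : SF.card ≤ (HF ∪ BF).card * k := by
    calc SF.card ≤ ((HF ∪ BF).biUnion
          (fun x => (Set.toFinite (PathStart T t₁ k x)).toFinset)).card :=
        Finset.card_le_card hSsub
      _ ≤ ∑ x ∈ HF ∪ BF, ((Set.toFinite (PathStart T t₁ k x)).toFinset).card :=
        Finset.card_biUnion_le
      _ ≤ ∑ _x ∈ HF ∪ BF, k := by
        refine Finset.sum_le_sum fun x _ => ?_
        rw [← Set.ncard_eq_toFinset_card]
        exact pathStart_ncard hT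
      _ = (HF ∪ BF).card * k := by rw [Finset.sum_const, smul_eq_mul]
  have hLH : LF.card ≤ HF.card :=
    Finset.card_le_card fun v hv => (Set.Finite.mem_toFinset _).2 (hleaf v hv)
  have hUB : (HF ∪ BF).card ≤ HF.card + BF.card := Finset.card_union_le _ _
  have hSn : S.ncard = SF.card := Set.ncard_eq_toFinset_card _ _
  have hHn : H.ncard = HF.card := Set.ncard_eq_toFinset_card _ _
  rw [hSn, hHn]
  calc SF.card ≤ (HF ∪ BF).card * k := hcard
    _ ≤ (HF.card + HF.card) * k := by
        refine Nat.mul_le_mul_right k ?_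
        omega
    _ = 2 * (k * HF.card) := by ring
    _ ≤ 3 * (k * HF.card) := Nat.mul_le_mul_right _ (by norm_num)
    _ = 3 * k * HF.card := (mul_assoc 3 k HF.card).symm
end
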